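/- arXiv:2408.13168 — 5 statements merged into one kernel-verified Lean document; each statement's English description precedes it below -/
import Mathlib

section
/- Let S, X, T, Y be discrete random variables with finite ranges on a common probability space. If I(Y;S) = 0, then I(Y;T) ≤ H(T|S). -/
open MeasureTheory ProbabilityTheory

section AuxInequalities

/-- Gibbs' inequality (unnormalized form), proved from `log x ≤ x - 1`. -/
lemma gibbs_aux {ι : Type*} [Fintype ι] (p q : ι → ℝ)
    (hp : ∀ i, 0 ≤ p i) (hq : ∀ i, 0 ≤ q i)
    (hpq : ∀ i, p i ≠ 0 → q i ≠ 0) (hsum : ∑ i, q i ≤ ∑ i, p i) :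
    ∑ i, p i * Real.log (q i) ≤ ∑ i, p i * Real.log (p i) := by
  have key : ∀ i, p i * Real.log (q i) - p i * Real.log (p i) ≤ q i - p i := by
    intro i
    rcases (hp i).eq_or_lt with h | h
    · rw [← h]; simpa using hq i
    · have hq' : 0 < q i := (hq i).lt_of_ne' (hpq i h.ne')
      have hlog := Real.log_le_sub_one_of_pos (div_pos hq' h)
      rw [Real.log_div hq'.ne' h.ne'] at hlog
      have h2 := mul_le_mul_of_nonneg_left hlog h.le
      calc p i * Real.log (q i) - p i * Real.log (p i)
          = p i * (Real.log (q i) - Real.log (p i)) := by ring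
        _ ≤ p i * (q i / p i - 1) := h2
        _ = q i - p i := by field_simp
  have := Finset.sum_le_sum (fun i (_ : i ∈ Finset.univ) => key i)
  rw [Finset.sum_sub_distrib, Finset.sum_sub_distrib] at this
  linarith

/-- Monotonicity: `∑ p log p` of the joint is at most that of a marginal. -/
lemma margmono_aux {α β γ : Type*} [Fintype α] [Fintype β] [Fintype γ]
    (p : α → β → γ → ℝ) (hp : ∀ a b c, 0 ≤ p a b c) :
    ∑ a, ∑ b, ∑ c, p a b c * Real.log (p a b c)
      ≤ ∑ a, ∑ b, (∑ c, p a b c) * Real.log (∑ c, p a b c) := by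
  refine Finset.sum_le_sum fun a _ => Finset.sum_le_sum fun b _ => ?_
  have hm : ∀ c, p a b c ≤ ∑ c, p a b c := fun c =>
    Finset.single_le_sum (fun c _ => hp a b c) (Finset.mem_univ c)
  calc ∑ c, p a b c * Real.log (p a b c)
      ≤ ∑ c, p a b c * Real.log (∑ c, p a b c) := by
        refine Finset.sum_le_sum fun c _ => ?_
        rcases (hp a b c).eq_or_lt with h | h
        · rw [← h]; simp
        · exact mul_le_mul_of_nonneg_left
            (Real.log_le_log h (hm c)) (hp a b c)
    _ = (∑ c, p a b c) * Real.log (∑ c, p a b c) := by rw [← Finset.sum_mul]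

/-- Submodularity of entropy in `∑ p log p` form: `e₁₃ + e₂₃ ≤ e₁₂₃ + e₃`. -/
lemma submod_aux {α β γ : Type*} [Fintype α] [Fintype β] [Fintype γ]
    (p : α → β → γ → ℝ) (hp : ∀ a b c, 0 ≤ p a b c) :
    (∑ a, ∑ c, (∑ b, p a b c) * Real.log (∑ b, p a b c))
      + (∑ b, ∑ c, (∑ a, p a b c) * Real.log (∑ a, p a b c))
    ≤ (∑ a, ∑ b, ∑ c, p a b c * Real.log (p a b c))
      + (∑ c, (∑ a, ∑ b, p a b c) * Real.log (∑ a, ∑ b, p a b c)) := by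
  classical
  set u : α → γ → ℝ := fun a c => ∑ b, p a b c with hu_def
  set v : β → γ → ℝ := fun b c => ∑ a, p a b c with hv_def
  set r : γ → ℝ := fun c => ∑ a, ∑ b, p a b c with hr_def
  have hu0 : ∀ a c, 0 ≤ u a c := fun a c => Finset.sum_nonneg fun b _ => hp a b c
  have hv0 : ∀ b c, 0 ≤ v b c := fun b c => Finset.sum_nonneg fun a _ => hp a b c
  have hr0 : ∀ c, 0 ≤ r c := fun c =>
    Finset.sum_nonneg fun a _ => Finset.sum_nonneg fun b _ => hp a b c
  have hpu : ∀ a b c, p a b c ≤ u a c := fun a b c =>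
    Finset.single_le_sum (fun b _ => hp a b c) (Finset.mem_univ b)
  have hpv : ∀ a b c, p a b c ≤ v b c := fun a b c =>
    Finset.single_le_sum (fun a _ => hp a b c) (Finset.mem_univ a)
  have hur : ∀ a c, u a c ≤ r c := fun a c =>
    Finset.single_le_sum (fun a _ => hu0 a c) (Finset.mem_univ a)
  have hvr : ∀ c, ∑ b, v b c = r c := fun c => Finset.sum_comm
  have hQsum : (∑ a, ∑ b, ∑ c, u a c * v b c / r c) = ∑ c, r c := by
    have h1 : ∀ a, (∑ b, ∑ c, u a c * v b c / r c) = ∑ c, u a c * (r c / r c) := by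
      intro a
      rw [Finset.sum_comm]
      refine Finset.sum_congr rfl fun c _ => ?_
      simp_rw [mul_div_assoc, ← Finset.mul_sum, ← Finset.sum_div, hvr c]
    simp_rw [h1]
    rw [Finset.sum_comm]
    refine Finset.sum_congr rfl fun c _ => ?_
    rw [← Finset.sum_mul]
    have h2 : (∑ a, u a c) = r c := rfl
    rw [h2]
    rcases eq_or_ne (r c) 0 with h | h
    · simp [h]
    · rw [div_self h, mul_one]
  have hPsum : (∑ a, ∑ b, ∑ c, p a b c) = ∑ c, r c := by
    have h1 : ∀ a, (∑ b, ∑ c, p a b c) = ∑ c, u a c := fun a => Finset.sum_comm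
    simp_rw [h1]
    exact Finset.sum_comm
  have key := gibbs_aux (ι := α × β × γ)
    (fun i => p i.1 i.2.1 i.2.2)
    (fun i => u i.1 i.2.2 * v i.2.1 i.2.2 / r i.2.2)
    (fun i => hp _ _ _)
    (fun i => div_nonneg (mul_nonneg (hu0 _ _) (hv0 _ _)) (hr0 _))
    (fun i hi => by
      have hppos : 0 < p i.1 i.2.1 i.2.2 := (hp _ _ _).lt_of_ne' hi
      have hup : 0 < u i.1 i.2.2 := lt_of_lt_of_le hppos (hpu _ _ _)
      have hvp : 0 < v i.2.1 i.2.2 := lt_of_lt_of_le hppos (hpv _ _ _)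
      have hrp : 0 < r i.2.2 := lt_of_lt_of_le hup (hur _ _)
      exact ne_of_gt (div_pos (mul_pos hup hvp) hrp))
    (le_of_eq (by
      rw [Fintype.sum_prod_type, Fintype.sum_prod_type]
      simp_rw [Fintype.sum_prod_type]
      rw [hQsum, ← hPsum]))
  rw [Fintype.sum_prod_type] at key
  simp_rw [Fintype.sum_prod_type] at key
  have stepA : ∀ (a : α) (b : β) (c : γ),
      p a b c * Real.log (u a c * v b c / r c)
        = p a b c * Real.log (u a c) + p a b c * Real.log (v b c)
          - p a b c * Real.log (r c) := by
    intro a b c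
    rcases eq_or_ne (p a b c) 0 with h | h
    · simp [h]
    · have hppos : 0 < p a b c := (hp a b c).lt_of_ne' h
      have hup : 0 < u a c := lt_of_lt_of_le hppos (hpu a b c)
      have hvp : 0 < v b c := lt_of_lt_of_le hppos (hpv a b c)
      have hrp : 0 < r c := lt_of_lt_of_le hup (hur a c)
      rw [Real.log_div (mul_ne_zero hup.ne' hvp.ne') hrp.ne',
        Real.log_mul hup.ne' hvp.ne']
      ring
  simp_rw [stepA, Finset.sum_sub_distrib, Finset.sum_add_distrib] at key
  have hA : (∑ a, ∑ b, ∑ c, p a b c * Real.log (u a c))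
      = ∑ a, ∑ c, u a c * Real.log (u a c) := by
    refine Finset.sum_congr rfl fun a _ => ?_
    rw [Finset.sum_comm]
    exact Finset.sum_congr rfl fun c _ => by rw [← Finset.sum_mul]
  have hB : (∑ a, ∑ b, ∑ c, p a b c * Real.log (v b c))
      = ∑ b, ∑ c, v b c * Real.log (v b c) := by
    rw [Finset.sum_comm]
    refine Finset.sum_congr rfl fun b _ => ?_
    rw [Finset.sum_comm]
    exact Finset.sum_congr rfl fun c _ => by rw [← Finset.sum_mul]
  have hC : (∑ a, ∑ b, ∑ c, p a b c * Real.log (r c))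
      = ∑ c, r c * Real.log (r c) := by
    have h1 : ∀ a, (∑ b, ∑ c, p a b c * Real.log (r c))
        = ∑ c, u a c * Real.log (r c) := by
      intro a
      rw [Finset.sum_comm]
      exact Finset.sum_congr rfl fun c _ => by rw [← Finset.sum_mul]
    simp_rw [h1]
    rw [Finset.sum_comm]
    refine Finset.sum_congr rfl fun c _ => ?_
    rw [← Finset.sum_mul]
  rw [hA, hB, hC] at key
  simp only [hu_def, hv_def, hr_def] at key ⊢
  linarith

/-- Decomposing the measure of a set along the fibers of a finitely-valued map. -/
lemma slice_aux {Ω : Type*} [MeasurableSpace Ω] (μ : MeasureTheory.Measure Ω)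
    [MeasureTheory.IsFiniteMeasure μ]
    {δ : Type*} [Fintype δ] [MeasurableSpace δ] [DiscreteMeasurableSpace δ]
    {f : Ω → δ} (hf : Measurable f) (A : Set Ω) (hA : MeasurableSet A) :
    (μ A).toReal = ∑ d : δ, (μ (A ∩ f ⁻¹' {d})).toReal := by
  classical
  rw [← ENNReal.toReal_sum (fun d _ => measure_ne_top μ _)]
  congr 1
  have hcover : A = ⋃ d ∈ (Finset.univ : Finset δ), A ∩ f ⁻¹' {d} := by
    ext ω; simp
  conv_lhs => rw [hcover]
  rw [measure_biUnion_finset]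
  · intro i _ j _ hij
    refine Set.disjoint_left.2 ?_
    rintro x ⟨_, hxi⟩ ⟨_, hxj⟩
    simp only [Set.mem_preimage, Set.mem_singleton_iff] at hxi hxj
    exact hij (hxi ▸ hxj ▸ rfl)
  · exact fun d _ => hA.inter (hf MeasurableSet.of_discrete)

end AuxInequalities

/-- Shannon entropy (base 2) of a finitely-valued random variable `X` on `(Ω, μ)`. -/
noncomputable def entH {Ω : Type*} [MeasurableSpace Ω] (μ : Measure Ω)
    {α : Type*} [Fintype α] (X : Ω → α) : ℝ :=
  -∑ a : α, ((μ (X ⁻¹' {a})).toReal * Real.logb 2 (μ (X ⁻¹' {a})).toReal)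

/-- Conditional entropy `H(X | Y)` (base 2). -/
noncomputable def condEntH {Ω : Type*} [MeasurableSpace Ω] (μ : Measure Ω)
    {α β : Type*} [Fintype α] [Fintype β] (X : Ω → α) (Y : Ω → β) : ℝ :=
  entH μ (fun ω => (X ω, Y ω)) - entH μ Y

/-- Mutual information `I(X ; Y)` (base 2). -/
noncomputable def mutInf {Ω : Type*} [MeasurableSpace Ω] (μ : Measure Ω)
    {α β : Type*} [Fintype α] [Fintype β] (X : Ω → α) (Y : Ω → β) : ℝ :=
  entH μ X + entH μ Y - entH μ (fun ω => (X ω, Y ω))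

/-- Conditional mutual information `I(X ; Y | Z)` (base 2). -/
noncomputable def condMutInf {Ω : Type*} [MeasurableSpace Ω] (μ : Measure Ω)
    {α β γ : Type*} [Fintype α] [Fintype β] [Fintype γ]
    (X : Ω → α) (Y : Ω → β) (Z : Ω → γ) : ℝ :=
  condEntH μ X Z + condEntH μ Y Z - condEntH μ (fun ω => (X ω, Y ω)) Z

/-- Expressing `entH` through natural logarithms. -/
lemma entH_eq_sum_log {Ω : Type*} [MeasurableSpace Ω] (μ : Measure Ω)
    {α : Type*} [Fintype α] (X : Ω → α) :
    entH μ X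
      = -(∑ a : α, (μ (X ⁻¹' {a})).toReal * Real.log (μ (X ⁻¹' {a})).toReal)
          / Real.log 2 := by
  simp only [entH, Real.logb]
  simp_rw [← mul_div_assoc]
  rw [← Finset.sum_div, neg_div]

/-- If `I(Y;S) = 0`, then `I(Y;T) ≤ H(T|S)`. -/
theorem utility_upper_bound_perfect_privacy
    {Ω 𝒮 𝒳 𝒯 𝒴 : Type*} [MeasurableSpace Ω]
    [Fintype 𝒮] [MeasurableSpace 𝒮] [DiscreteMeasurableSpace 𝒮]
    [Fintype 𝒳] [MeasurableSpace 𝒳] [DiscreteMeasurableSpace 𝒳]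
    [Fintype 𝒯] [MeasurableSpace 𝒯] [DiscreteMeasurableSpace 𝒯]
    [Fintype 𝒴] [MeasurableSpace 𝒴] [DiscreteMeasurableSpace 𝒴]
    (μ : Measure Ω) [IsProbabilityMeasure μ]
    (S : Ω → 𝒮) (X : Ω → 𝒳) (T : Ω → 𝒯) (Y : Ω → 𝒴)
    (hS : Measurable S) (hX : Measurable X) (hT : Measurable T) (hY : Measurable Y)
    (hperf : mutInf μ Y S = 0) :
    mutInf μ Y T ≤ condEntH μ T S := by
  classical
  set L : ℝ := Real.log 2 with hL_def
  have hL : 0 < L := Real.log_pos one_lt_two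
  set P : 𝒴 → 𝒮 → 𝒯 → ℝ :=
    fun a b c => (μ (Y ⁻¹' {a} ∩ S ⁻¹' {b} ∩ T ⁻¹' {c})).toReal with hP_def
  have hp : ∀ a b c, 0 ≤ P a b c := fun _ _ _ => ENNReal.toReal_nonneg
  have mY : ∀ a : 𝒴, MeasurableSet (Y ⁻¹' {a}) := fun a => hY MeasurableSet.of_discrete
  have mS : ∀ b : 𝒮, MeasurableSet (S ⁻¹' {b}) := fun b => hS MeasurableSet.of_discrete
  have mT : ∀ c : 𝒯, MeasurableSet (T ⁻¹' {c}) := fun c => hT MeasurableSet.of_discrete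
  -- marginal identities
  have h1 : ∀ a : 𝒴, (μ (Y ⁻¹' {a})).toReal = ∑ b, ∑ c, P a b c := by
    intro a
    rw [slice_aux μ hS _ (mY a)]
    refine Finset.sum_congr rfl fun b _ => ?_
    rw [slice_aux μ hT _ ((mY a).inter (mS b))]
  have h2 : ∀ b : 𝒮, (μ (S ⁻¹' {b})).toReal = ∑ a, ∑ c, P a b c := by
    intro b
    rw [slice_aux μ hY _ (mS b)]
    refine Finset.sum_congr rfl fun a _ => ?_
    rw [Set.inter_comm (S ⁻¹' {b}) (Y ⁻¹' {a})]
    rw [slice_aux μ hT _ ((mY a).inter (mS b))]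
  have h3 : ∀ c : 𝒯, (μ (T ⁻¹' {c})).toReal = ∑ a, ∑ b, P a b c := by
    intro c
    rw [slice_aux μ hY _ (mT c)]
    refine Finset.sum_congr rfl fun a _ => ?_
    rw [slice_aux μ hS _ ((mT c).inter (mY a))]
    refine Finset.sum_congr rfl fun b _ => ?_
    have hset : T ⁻¹' {c} ∩ Y ⁻¹' {a} ∩ S ⁻¹' {b}
        = Y ⁻¹' {a} ∩ S ⁻¹' {b} ∩ T ⁻¹' {c} := by
      ext ω
      simp only [Set.mem_inter_iff, Set.mem_preimage, Set.mem_singleton_iff]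
      tauto
    rw [hset]
  have h4 : ∀ (a : 𝒴) (c : 𝒯),
      (μ ((fun ω => (Y ω, T ω)) ⁻¹' {(a, c)})).toReal = ∑ b, P a b c := by
    intro a c
    have hset : (fun ω => (Y ω, T ω)) ⁻¹' {(a, c)} = Y ⁻¹' {a} ∩ T ⁻¹' {c} := by
      ext ω; simp [Prod.ext_iff]
    rw [hset, slice_aux μ hS _ ((mY a).inter (mT c))]
    refine Finset.sum_congr rfl fun b _ => ?_
    have hset2 : Y ⁻¹' {a} ∩ T ⁻¹' {c} ∩ S ⁻¹' {b}
        = Y ⁻¹' {a} ∩ S ⁻¹' {b} ∩ T ⁻¹' {c} := by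
      ext ω
      simp only [Set.mem_inter_iff, Set.mem_preimage, Set.mem_singleton_iff]
      tauto
    rw [hset2]
  have h5 : ∀ (a : 𝒴) (b : 𝒮),
      (μ ((fun ω => (Y ω, S ω)) ⁻¹' {(a, b)})).toReal = ∑ c, P a b c := by
    intro a b
    have hset : (fun ω => (Y ω, S ω)) ⁻¹' {(a, b)} = Y ⁻¹' {a} ∩ S ⁻¹' {b} := by
      ext ω; simp [Prod.ext_iff]
    rw [hset, slice_aux μ hT _ ((mY a).inter (mS b))]
  have h6 : ∀ (c : 𝒯) (b : 𝒮),
      (μ ((fun ω => (T ω, S ω)) ⁻¹' {(c, b)})).toReal = ∑ a, P a b c := by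
    intro c b
    have hset : (fun ω => (T ω, S ω)) ⁻¹' {(c, b)} = T ⁻¹' {c} ∩ S ⁻¹' {b} := by
      ext ω; simp [Prod.ext_iff]
    rw [hset, slice_aux μ hY _ ((mT c).inter (mS b))]
    refine Finset.sum_congr rfl fun a _ => ?_
    have hset2 : T ⁻¹' {c} ∩ S ⁻¹' {b} ∩ Y ⁻¹' {a}
        = Y ⁻¹' {a} ∩ S ⁻¹' {b} ∩ T ⁻¹' {c} := by
      ext ω
      simp only [Set.mem_inter_iff, Set.mem_preimage, Set.mem_singleton_iff]
      tauto
    rw [hset2]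
  -- entropy expressions
  have eY : entH μ Y
      = -(∑ a, (∑ b, ∑ c, P a b c) * Real.log (∑ b, ∑ c, P a b c)) / L := by
    rw [entH_eq_sum_log]
    simp_rw [h1]
    rfl
  have eS : entH μ S
      = -(∑ b, (∑ a, ∑ c, P a b c) * Real.log (∑ a, ∑ c, P a b c)) / L := by
    rw [entH_eq_sum_log]
    simp_rw [h2]
    rfl
  have eT : entH μ T
      = -(∑ c, (∑ a, ∑ b, P a b c) * Real.log (∑ a, ∑ b, P a b c)) / L := by
    rw [entH_eq_sum_log]
    simp_rw [h3]
    rfl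
  have eYT : entH μ (fun ω => (Y ω, T ω))
      = -(∑ a, ∑ c, (∑ b, P a b c) * Real.log (∑ b, P a b c)) / L := by
    rw [entH_eq_sum_log, Fintype.sum_prod_type]
    simp_rw [h4]
    rfl
  have eYS : entH μ (fun ω => (Y ω, S ω))
      = -(∑ a, ∑ b, (∑ c, P a b c) * Real.log (∑ c, P a b c)) / L := by
    rw [entH_eq_sum_log, Fintype.sum_prod_type]
    simp_rw [h5]
    rfl
  have eTS : entH μ (fun ω => (T ω, S ω))
      = -(∑ c, ∑ b, (∑ a, P a b c) * Real.log (∑ a, P a b c)) / L := by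
    rw [entH_eq_sum_log, Fintype.sum_prod_type]
    simp_rw [h6]
    rfl
  -- abbreviations for the six sums
  set sY := ∑ a, (∑ b, ∑ c, P a b c) * Real.log (∑ b, ∑ c, P a b c) with hsY
  set sS := ∑ b, (∑ a, ∑ c, P a b c) * Real.log (∑ a, ∑ c, P a b c) with hsS
  set sT := ∑ c, (∑ a, ∑ b, P a b c) * Real.log (∑ a, ∑ b, P a b c) with hsT
  set sYT := ∑ a, ∑ c, (∑ b, P a b c) * Real.log (∑ b, P a b c) with hsYT
  set sYS := ∑ a, ∑ b, (∑ c, P a b c) * Real.log (∑ c, P a b c) with hsYS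
  set sTS := ∑ c, ∑ b, (∑ a, P a b c) * Real.log (∑ a, P a b c) with hsTS
  -- perfect privacy gives `sYS = sY + sS`
  rw [mutInf, eY, eS, eYS] at hperf
  have hperf' : sYS - sY - sS = 0 := by
    have hdiv : (sYS - sY - sS) / L = 0 := by
      rw [← hperf]; ring
    rcases div_eq_zero_iff.1 hdiv with h | h
    · exact h
    · exact absurd h hL.ne'
  -- the key information inequality `sYT + sTS ≤ sYS + sT`
  have hsub := submod_aux P hp
  have hmono := margmono_aux P hp
  have hswap : sTS = ∑ b, ∑ c, (∑ a, P a b c) * Real.log (∑ a, P a b c) :=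
    Finset.sum_comm
  have hmain : sYT + sTS ≤ sYS + sT := by
    have h123 : (∑ a, ∑ b, ∑ c, P a b c * Real.log (P a b c)) ≤ sYS := hmono
    rw [hswap]
    linarith
  -- conclude
  rw [mutInf, condEntH, eY, eT, eYT, eTS, eS]
  have hfinal : (sYT - sY - sT) / L ≤ (sS - sTS) / L := by
    rw [div_le_div_iff_of_pos_right hL]
    linarith
  calc -sY / L + -sT / L - -sYT / L = (sYT - sY - sT) / L := by ring
    _ ≤ (sS - sTS) / L := hfinal
    _ = -sTS / L - -sS / L := by ring
end

section
/- Let (S, X, T) be discrete random variables with finite ranges and joint distribution P_{S,X,T}. Then there exist a probability space carrying random variables (S', X', T', Y) with finite ranges such that (S', X', T') has the same joint distribution as (S, X, T), I(Y;S') = 0, I(Y;X') ≤ H(X|S), and I(Y;T') ≥ H(T|S) − H(S|T) (equivalently, I(Y;T') ≥ H(T) − H(S)). -/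
open MeasureTheory ProbabilityTheory

set_option linter.unusedSectionVars false
set_option linter.unusedTactic false
set_option maxHeartbeats 1000000
open Finset Real


-- A: pushforward of pmf decreases entropy
theorem entSum_comp_le {α β : Type*} [Fintype α] [Fintype β] [DecidableEq β]
    (p : α → ℝ) (hp : ∀ a, 0 ≤ p a) (f : α → β) :
    -∑ b : β, (∑ a ∈ univ.filter (fun a => f a = b), p a) *
        Real.logb 2 (∑ a ∈ univ.filter (fun a => f a = b), p a)
      ≤ -∑ a : α, p a * Real.logb 2 (p a) := by
  set P : β → ℝ := fun b => ∑ a ∈ univ.filter (fun a => f a = b), p a with hP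
  have key : ∑ b : β, P b * Real.logb 2 (P b)
      = ∑ a : α, p a * Real.logb 2 (P (f a)) := by
    rw [← Finset.sum_fiberwise univ f (fun a => p a * Real.logb 2 (P (f a)))]
    refine Finset.sum_congr rfl fun b _ => ?_
    rw [show (∑ a ∈ filter (fun i => f i = b) univ, p a * Real.logb 2 (P (f a)))
        = ∑ a ∈ filter (fun i => f i = b) univ, p a * Real.logb 2 (P b) from
      Finset.sum_congr rfl (fun a ha => by
        rw [(Finset.mem_filter.mp ha).2]), ← Finset.sum_mul]
  rw [key]
  refine neg_le_neg (Finset.sum_le_sum fun a _ => ?_)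
  rcases eq_or_lt_of_le (hp a) with h0 | h0
  · simp [← h0]
  · have hle : p a ≤ P (f a) :=
      Finset.single_le_sum (fun i _ => hp i) (by simp)
    have hPpos : 0 < P (f a) := lt_of_lt_of_le h0 hle
    exact mul_le_mul_of_nonneg_left
      ((Real.logb_le_logb one_lt_two h0 hPpos).mpr hle) (le_of_lt h0)

-- B: entropy of independent product
theorem entSum_indep {α β : Type*} [Fintype α] [Fintype β]
    (p : α → ℝ) (q : β → ℝ) (hp1 : ∑ a, p a = 1) (hq1 : ∑ b, q b = 1) :
    -∑ x : α × β, (p x.1 * q x.2) * Real.logb 2 (p x.1 * q x.2)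
      = (-∑ a : α, p a * Real.logb 2 (p a)) + (-∑ b : β, q b * Real.logb 2 (q b)) := by
  have key : ∀ x : α × β, (p x.1 * q x.2) * Real.logb 2 (p x.1 * q x.2)
      = q x.2 * (p x.1 * Real.logb 2 (p x.1)) + p x.1 * (q x.2 * Real.logb 2 (q x.2)) := by
    rintro ⟨a, b⟩
    by_cases ha : p a = 0
    · simp [ha]
    by_cases hb : q b = 0
    · simp [hb]
    rw [Real.logb_mul ha hb]; ring
  rw [Finset.sum_congr rfl fun x _ => key x]
  rw [Finset.sum_add_distrib, Fintype.sum_prod_type, Fintype.sum_prod_type]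
  simp only [← Finset.mul_sum, ← Finset.sum_mul]
  rw [hq1, hp1]
  ring


private lemma t3s {α β γ M : Type*} [Fintype α] [Fintype β] [Fintype γ] [AddCommMonoid M]
    (f : α × β × γ → M) : ∑ x : α × β × γ, f x = ∑ a : α, ∑ b : β, ∑ c : γ, f (a, b, c) := by
  rw [Fintype.sum_prod_type]
  exact Finset.sum_congr rfl fun a _ => Fintype.sum_prod_type _

theorem entSum_submod {α β γ : Type*} [Fintype α] [Fintype β] [Fintype γ]
    (p : α × β × γ → ℝ) (hp : ∀ x, 0 ≤ p x) :
    (-∑ b : β, (∑ a : α, ∑ c : γ, p (a, b, c)) * Real.logb 2 (∑ a : α, ∑ c : γ, p (a, b, c)))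
      + (-∑ x : α × β × γ, p x * Real.logb 2 (p x))
    ≤ (-∑ ab : α × β, (∑ c : γ, p (ab.1, ab.2, c)) * Real.logb 2 (∑ c : γ, p (ab.1, ab.2, c)))
      + (-∑ bc : β × γ, (∑ a : α, p (a, bc.1, bc.2)) * Real.logb 2 (∑ a : α, p (a, bc.1, bc.2))) := by
  classical
  set pAB : α → β → ℝ := fun a b => ∑ c : γ, p (a, b, c) with hpAB
  set pBC : β → γ → ℝ := fun b c => ∑ a : α, p (a, b, c) with hpBC
  set pB : β → ℝ := fun b => ∑ a : α, ∑ c : γ, p (a, b, c) with hpB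
  have hpABnn : ∀ a b, 0 ≤ pAB a b := fun a b => Finset.sum_nonneg fun c _ => hp _
  have hpBCnn : ∀ b c, 0 ≤ pBC b c := fun b c => Finset.sum_nonneg fun a _ => hp _
  have hpBnn : ∀ b, 0 ≤ pB b := fun b => Finset.sum_nonneg fun a _ =>
    Finset.sum_nonneg fun c _ => hp _
  have hAB_B : ∀ b, ∑ a : α, pAB a b = pB b := fun b => rfl
  have hBC_B : ∀ b, ∑ c : γ, pBC b c = pB b := fun b => Finset.sum_comm
  set q : α × β × γ → ℝ := fun x => pAB x.1 x.2.1 * pBC x.2.1 x.2.2 / pB x.2.1 with hq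
  have hqnn : ∀ x, 0 ≤ q x := fun x =>
    div_nonneg (mul_nonneg (hpABnn _ _) (hpBCnn _ _)) (hpBnn _)
  have hpos : ∀ x : α × β × γ, 0 < p x →
      0 < pAB x.1 x.2.1 ∧ 0 < pBC x.2.1 x.2.2 ∧ 0 < pB x.2.1 := by
    rintro ⟨a, b, c⟩ hx
    refine ⟨lt_of_lt_of_le hx ?_, lt_of_lt_of_le hx ?_, lt_of_lt_of_le hx ?_⟩
    · exact Finset.single_le_sum (f := fun c' => p (a, b, c'))
        (fun i _ => hp _) (Finset.mem_univ c)
    · exact Finset.single_le_sum (f := fun a' => p (a', b, c))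
        (fun i _ => hp _) (Finset.mem_univ a)
    · calc p (a,b,c) ≤ ∑ c' : γ, p (a, b, c') :=
            Finset.single_le_sum (f := fun c' => p (a, b, c'))
              (fun i _ => hp _) (Finset.mem_univ c)
        _ ≤ ∑ a' : α, ∑ c' : γ, p (a', b, c') :=
            Finset.single_le_sum (f := fun a' => ∑ c' : γ, p (a', b, c'))
              (fun i _ => Finset.sum_nonneg fun c' _ => hp _) (Finset.mem_univ a)
  have hsum_p : ∑ x : α × β × γ, p x = ∑ b : β, pB b := by
    rw [t3s, Finset.sum_comm]
  have hsum_q : ∑ x : α × β × γ, q x ≤ ∑ b : β, pB b := by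
    rw [t3s, Finset.sum_comm]
    refine Finset.sum_le_sum fun b _ => ?_
    have hrow : ∑ a : α, ∑ c : γ, q (a, b, c) = pB b * pB b / pB b := by
      have h1 : ∀ a, ∑ c : γ, q (a, b, c) = pAB a b * pB b / pB b := by
        intro a
        simp only [hq]
        rw [← Finset.sum_div, ← Finset.mul_sum, hBC_B]
      rw [Finset.sum_congr rfl fun a _ => h1 a, ← Finset.sum_div, ← Finset.sum_mul, hAB_B]
    rw [hrow]
    by_cases hb : pB b = 0
    · rw [hb]; simp
    · rw [mul_div_assoc, div_self hb, mul_one]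
  have gibbs : ∑ x, p x * Real.logb 2 (q x) ≤ ∑ x, p x * Real.logb 2 (p x) := by
    rw [← sub_nonpos, ← Finset.sum_sub_distrib]
    have hterm : ∀ x : α × β × γ, p x * Real.logb 2 (q x) - p x * Real.logb 2 (p x)
        ≤ (q x - p x) / Real.log 2 := by
      intro x
      rcases eq_or_lt_of_le (hp x) with h0 | h0
      · rw [← h0]
        simp only [zero_mul, sub_zero, zero_sub, neg_zero]
        have := hqnn x
        positivity
      · obtain ⟨h1, h2, h3⟩ := hpos x h0
        have hqpos : 0 < q x := div_pos (mul_pos h1 h2) h3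
        rw [← mul_sub, ← Real.logb_div (ne_of_gt hqpos) (ne_of_gt h0)]
        rw [Real.logb, div_eq_mul_inv (Real.log _), ← mul_assoc]
        have hlog : Real.log (q x / p x) ≤ q x / p x - 1 :=
          Real.log_le_sub_one_of_pos (div_pos hqpos h0)
        have h2pos : (0:ℝ) < Real.log 2 := Real.log_pos one_lt_two
        rw [div_eq_mul_inv (q x - p x)]
        refine mul_le_mul_of_nonneg_right ?_ (le_of_lt (inv_pos.mpr h2pos))
        calc p x * Real.log (q x / p x) ≤ p x * (q x / p x - 1) :=
              mul_le_mul_of_nonneg_left hlog (le_of_lt h0)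
          _ = q x - p x := by field_simp
    calc ∑ x, (p x * Real.logb 2 (q x) - p x * Real.logb 2 (p x))
        ≤ ∑ x, (q x - p x) / Real.log 2 := Finset.sum_le_sum fun x _ => hterm x
      _ = (∑ x, q x - ∑ x, p x) / Real.log 2 := by
          rw [← Finset.sum_div, Finset.sum_sub_distrib]
      _ ≤ 0 := by
          apply div_nonpos_of_nonpos_of_nonneg _ (Real.log_nonneg one_le_two)
          rw [sub_nonpos, hsum_p]
          exact hsum_q
  have hsplit : ∀ x : α × β × γ, p x * Real.logb 2 (q x)
      = p x * Real.logb 2 (pAB x.1 x.2.1) + p x * Real.logb 2 (pBC x.2.1 x.2.2)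
        - p x * Real.logb 2 (pB x.2.1) := by
    intro x
    rcases eq_or_lt_of_le (hp x) with h0 | h0
    · rw [← h0]; ring
    · obtain ⟨h1, h2, h3⟩ := hpos x h0
      simp only [hq]
      rw [Real.logb_div (ne_of_gt (mul_pos h1 h2)) (ne_of_gt h3),
        Real.logb_mul (ne_of_gt h1) (ne_of_gt h2)]
      ring
  have hA : ∑ x : α × β × γ, p x * Real.logb 2 (pAB x.1 x.2.1)
      = ∑ ab : α × β, pAB ab.1 ab.2 * Real.logb 2 (pAB ab.1 ab.2) := by
    rw [t3s, Fintype.sum_prod_type]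
    refine Finset.sum_congr rfl fun a _ => Finset.sum_congr rfl fun b _ => ?_
    show ∑ c : γ, p (a, b, c) * Real.logb 2 (pAB a b) = pAB a b * Real.logb 2 (pAB a b)
    rw [← Finset.sum_mul]
  have hB : ∑ x : α × β × γ, p x * Real.logb 2 (pBC x.2.1 x.2.2)
      = ∑ bc : β × γ, pBC bc.1 bc.2 * Real.logb 2 (pBC bc.1 bc.2) := by
    rw [t3s, Finset.sum_comm, Fintype.sum_prod_type]
    refine Finset.sum_congr rfl fun b _ => ?_
    rw [Finset.sum_comm]
    refine Finset.sum_congr rfl fun c _ => ?_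
    show ∑ a : α, p (a, b, c) * Real.logb 2 (pBC b c) = pBC b c * Real.logb 2 (pBC b c)
    rw [← Finset.sum_mul]
  have hC : ∑ x : α × β × γ, p x * Real.logb 2 (pB x.2.1)
      = ∑ b : β, pB b * Real.logb 2 (pB b) := by
    rw [t3s, Finset.sum_comm]
    refine Finset.sum_congr rfl fun b _ => ?_
    have h1 : ∀ a : α, ∑ c : γ, p (a, b, c) * Real.logb 2 (pB b)
        = (∑ c : γ, p (a, b, c)) * Real.logb 2 (pB b) := fun a => (Finset.sum_mul ..).symm
    rw [Finset.sum_congr rfl fun a _ => h1 a, ← Finset.sum_mul]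
  have key : ∑ x, p x * Real.logb 2 (q x)
      = (∑ ab : α × β, pAB ab.1 ab.2 * Real.logb 2 (pAB ab.1 ab.2))
        + (∑ bc : β × γ, pBC bc.1 bc.2 * Real.logb 2 (pBC bc.1 bc.2))
        - ∑ b : β, pB b * Real.logb 2 (pB b) := by
    rw [Finset.sum_congr rfl fun x _ => hsplit x, Finset.sum_sub_distrib,
      Finset.sum_add_distrib, hA, hB, hC]
  show (-∑ b : β, pB b * Real.logb 2 (pB b)) + _
    ≤ (-∑ ab : α × β, pAB ab.1 ab.2 * Real.logb 2 (pAB ab.1 ab.2))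
      + (-∑ bc : β × γ, pBC bc.1 bc.2 * Real.logb 2 (pBC bc.1 bc.2))
  linarith [gibbs, key]

section Glue
variable {Ω : Type*} [MeasurableSpace Ω] (μ : Measure Ω) [IsProbabilityMeasure μ]
variable {α β : Type*} [Fintype α] [MeasurableSpace α] [MeasurableSingletonClass α]

theorem measure_comp_singleton [DecidableEq β] (Z : Ω → α) (hZ : Measurable Z)
    (f : α → β) (b : β) :
    μ ((fun ω => f (Z ω)) ⁻¹' {b}) = ∑ a ∈ univ.filter (fun a => f a = b), μ (Z ⁻¹' {a}) := by
  have hset : (fun ω => f (Z ω)) ⁻¹' {b}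
      = ⋃ a ∈ univ.filter (fun a => f a = b), Z ⁻¹' {a} := by
    ext ω
    simp only [Set.mem_preimage, Set.mem_singleton_iff, Set.mem_iUnion, Finset.mem_filter,
      Finset.mem_univ, true_and]
    constructor
    · intro h; exact ⟨Z ω, h, rfl⟩
    · rintro ⟨a, h1, h2⟩; rw [h2, h1]
  rw [hset, measure_biUnion_finset]
  · intro a _ a' _ hne
    exact Set.disjoint_left.mpr fun ω h1 h2 => hne (by
      simp only [Set.mem_preimage, Set.mem_singleton_iff] at h1 h2; rw [← h1, ← h2])
  · exact fun a _ => hZ (measurableSet_singleton a)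

theorem pm_comp [DecidableEq β] (Z : Ω → α) (hZ : Measurable Z) (f : α → β) (b : β) :
    (μ ((fun ω => f (Z ω)) ⁻¹' {b})).toReal
      = ∑ a ∈ univ.filter (fun a => f a = b), (μ (Z ⁻¹' {a})).toReal := by
  rw [measure_comp_singleton μ Z hZ f b, ENNReal.toReal_sum fun a _ => measure_ne_top μ _]

theorem sum_pm_one (Z : Ω → α) (hZ : Measurable Z) :
    ∑ a : α, (μ (Z ⁻¹' {a})).toReal = 1 := by
  have hset : (Set.univ : Set Ω) = ⋃ a ∈ (univ : Finset α), Z ⁻¹' {a} := by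
    ext ω; simp
  have : μ (Set.univ) = ∑ a : α, μ (Z ⁻¹' {a}) := by
    rw [hset, measure_biUnion_finset]
    · intro a _ a' _ hne
      exact Set.disjoint_left.mpr fun ω h1 h2 => hne (by
        simp only [Set.mem_preimage, Set.mem_singleton_iff] at h1 h2; rw [← h1, ← h2])
    · exact fun a _ => hZ (measurableSet_singleton a)
  rw [← ENNReal.toReal_sum fun a _ => measure_ne_top μ _, ← this, measure_univ,
    ENNReal.toReal_one]

theorem entH_comp_le {β : Type*} [Fintype β] (Z : Ω → α) (hZ : Measurable Z) (f : α → β) :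
    entH μ (fun ω => f (Z ω)) ≤ entH μ Z := by
  classical
  unfold entH
  rw [Finset.sum_congr rfl fun b (_ : b ∈ univ) => by
    rw [pm_comp μ Z hZ f b]]
  exact entSum_comp_le (fun a => (μ (Z ⁻¹' {a})).toReal) (fun a => ENNReal.toReal_nonneg) f

theorem entH_comp_eq {β : Type*} [Fintype β] [MeasurableSpace β] [MeasurableSingletonClass β]
    (Z : Ω → α) (hZ : Measurable Z) (f : α → β) (g : β → α)
    (hfg : ∀ ω, g (f (Z ω)) = Z ω) :
    entH μ (fun ω => f (Z ω)) = entH μ Z := by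
  refine le_antisymm (entH_comp_le μ Z hZ f) ?_
  have hfZ : Measurable (fun ω => f (Z ω)) := (Measurable.of_discrete (f := f)).comp hZ
  have h2 := entH_comp_le μ (fun ω => f (Z ω)) hfZ g
  simp only [hfg] at h2
  exact h2

theorem entH_pair_of_indep {β : Type*} [Fintype β] [MeasurableSpace β]
    [MeasurableSingletonClass β] (A : Ω → α) (B : Ω → β)
    (hA : Measurable A) (hB : Measurable B)
    (h : ∀ a b, μ ((fun ω => (A ω, B ω)) ⁻¹' {(a, b)}) = μ (A ⁻¹' {a}) * μ (B ⁻¹' {b})) :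
    entH μ (fun ω => (A ω, B ω)) = entH μ A + entH μ B := by
  unfold entH
  have hrw : ∀ x : α × β, (μ ((fun ω => (A ω, B ω)) ⁻¹' {x})).toReal
      = (μ (A ⁻¹' {x.1})).toReal * (μ (B ⁻¹' {x.2})).toReal := by
    rintro ⟨a, b⟩
    rw [h a b, ENNReal.toReal_mul]
  rw [Finset.sum_congr rfl fun x (_ : x ∈ univ) => by rw [hrw x]]
  exact entSum_indep _ _ (sum_pm_one μ A hA) (sum_pm_one μ B hB)

end Glue

section Glue2

private lemma filter_sum₁ {α β γ M : Type*} [Fintype α] [Fintype β] [Fintype γ]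
    [AddCommMonoid M] [DecidableEq α] [DecidableEq β]
    (g : α × β × γ → M) (a : α) (b : β) :
    ∑ x ∈ univ.filter (fun x : α × β × γ => (x.1, x.2.1) = (a, b)), g x
      = ∑ c : γ, g (a, b, c) := by
  rw [Finset.sum_filter, t3s]
  simp [Prod.ext_iff, ite_and, Finset.sum_ite_eq']

private lemma filter_sum₂ {α β γ M : Type*} [Fintype α] [Fintype β] [Fintype γ]
    [AddCommMonoid M] [DecidableEq β] [DecidableEq γ]
    (g : α × β × γ → M) (b : β) (c : γ) :
    ∑ x ∈ univ.filter (fun x : α × β × γ => x.2 = (b, c)), g x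
      = ∑ a : α, g (a, b, c) := by
  rw [Finset.sum_filter, t3s]
  simp [Prod.ext_iff, ite_and, Finset.sum_ite_eq']

private lemma filter_sum₃ {α β γ M : Type*} [Fintype α] [Fintype β] [Fintype γ]
    [AddCommMonoid M] [DecidableEq β]
    (g : α × β × γ → M) (b : β) :
    ∑ x ∈ univ.filter (fun x : α × β × γ => x.2.1 = b), g x
      = ∑ a : α, ∑ c : γ, g (a, b, c) := by
  rw [Finset.sum_filter, t3s]
  refine Finset.sum_congr rfl fun a _ => ?_
  rw [Finset.sum_comm]
  simp [Finset.sum_ite_eq']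

variable {Ω : Type*} [MeasurableSpace Ω] (μ : Measure Ω) [IsProbabilityMeasure μ]

theorem entH_submod {α β γ : Type*}
    [Fintype α] [MeasurableSpace α] [MeasurableSingletonClass α]
    [Fintype β] [MeasurableSpace β] [MeasurableSingletonClass β]
    [Fintype γ] [MeasurableSpace γ] [MeasurableSingletonClass γ]
    (A : Ω → α) (B : Ω → β) (C : Ω → γ)
    (hA : Measurable A) (hB : Measurable B) (hC : Measurable C) :
    entH μ B + entH μ (fun ω => (A ω, B ω, C ω))
      ≤ entH μ (fun ω => (A ω, B ω)) + entH μ (fun ω => (B ω, C ω)) := by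
  classical
  have hABC : Measurable (fun ω => (A ω, B ω, C ω)) := hA.prodMk (hB.prodMk hC)
  set p : α × β × γ → ℝ := fun x => (μ ((fun ω => (A ω, B ω, C ω)) ⁻¹' {x})).toReal with hp
  have hAB : ∀ ab : α × β, (μ ((fun ω => (A ω, B ω)) ⁻¹' {ab})).toReal
      = ∑ c : γ, p (ab.1, ab.2, c) := by
    rintro ⟨a, b⟩
    have := pm_comp μ (fun ω => (A ω, B ω, C ω)) hABC
      (fun x : α × β × γ => (x.1, x.2.1)) (a, b)
    rw [show (fun ω => (fun x : α × β × γ => (x.1, x.2.1)) ((A ω, B ω, C ω)))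
        = (fun ω => (A ω, B ω)) from rfl] at this
    beta_reduce at this
    rw [this]; exact filter_sum₁ _ a b
  have hBC : ∀ bc : β × γ, (μ ((fun ω => (B ω, C ω)) ⁻¹' {bc})).toReal
      = ∑ a : α, p (a, bc.1, bc.2) := by
    rintro ⟨b, c⟩
    have := pm_comp μ (fun ω => (A ω, B ω, C ω)) hABC
      (fun x : α × β × γ => x.2) (b, c)
    rw [show (fun ω => (fun x : α × β × γ => x.2) ((A ω, B ω, C ω)))
        = (fun ω => (B ω, C ω)) from rfl] at this
    beta_reduce at this
    rw [this]; exact filter_sum₂ _ b c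
  have hBm : ∀ b : β, (μ (B ⁻¹' {b})).toReal = ∑ a : α, ∑ c : γ, p (a, b, c) := by
    intro b
    have := pm_comp μ (fun ω => (A ω, B ω, C ω)) hABC
      (fun x : α × β × γ => x.2.1) b
    rw [show (fun ω => (fun x : α × β × γ => x.2.1) ((A ω, B ω, C ω))) = B from rfl] at this
    beta_reduce at this
    rw [this]; exact filter_sum₃ _ b
  unfold entH
  rw [Finset.sum_congr rfl fun (b : β) (_ : b ∈ univ) => by rw [hBm b],
    Finset.sum_congr rfl fun (ab : α × β) (_ : ab ∈ univ) => by rw [hAB ab],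
    Finset.sum_congr rfl fun (bc : β × γ) (_ : bc ∈ univ) => by rw [hBC bc]]
  exact entSum_submod p fun x => ENNReal.toReal_nonneg

theorem entH_map {α E : Type*} [Fintype α] [MeasurableSpace α] [MeasurableSingletonClass α]
    [MeasurableSpace E] (ν : Measure E) (φ : Ω → E) (hφ : Measurable φ) (W : E → α)
    (hW : Measurable W) (hmap : ν = μ.map φ) :
    entH ν W = entH μ (fun ω => W (φ ω)) := by
  unfold entH
  refine congrArg _ (Finset.sum_congr rfl fun a _ => ?_)
  rw [hmap, Measure.map_apply hφ (hW (measurableSet_singleton a))]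
  rfl

end Glue2


section Main

-- ENNReal partition lemma
theorem sum_measure_preimage_one {Ω : Type*} [MeasurableSpace Ω] (μ : Measure Ω)
    [IsProbabilityMeasure μ] {α : Type*} [Fintype α] [MeasurableSpace α]
    [MeasurableSingletonClass α] (Z : Ω → α) (hZ : Measurable Z) :
    ∑ a : α, μ (Z ⁻¹' {a}) = 1 := by
  have hset : (Set.univ : Set Ω) = ⋃ a ∈ (univ : Finset α), Z ⁻¹' {a} := by
    ext ω; simp
  have h := measure_biUnion_finset (μ := μ) (s := (univ : Finset α)) (f := fun a => Z ⁻¹' {a})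
    (fun a _ a' _ hne => Set.disjoint_left.mpr fun ω h1 h2 => hne (by
      simp only [Set.mem_preimage, Set.mem_singleton_iff] at h1 h2; rw [← h1, ← h2]))
    (fun a _ => hZ (measurableSet_singleton a))
  rw [← h, ← hset, measure_univ]

theorem entH_fst {ΩA ΩB : Type*} [MeasurableSpace ΩA] [MeasurableSpace ΩB]
    (ρ : Measure ΩA) (mπ : Measure ΩB) [IsProbabilityMeasure mπ]
    {κ : Type*} [Fintype κ] (W : ΩA → κ) :
    entH (ρ.prod mπ) (fun ω' => W ω'.1) = entH ρ W := by
  unfold entH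
  refine congrArg _ (Finset.sum_congr rfl fun x _ => ?_)
  have hset : (fun ω' : ΩA × ΩB => W ω'.1) ⁻¹' {x} = (W ⁻¹' {x}) ×ˢ (Set.univ : Set ΩB) := by
    ext ⟨w, f⟩; exact ⟨fun h => ⟨h, trivial⟩, fun h => h.1⟩
  rw [hset, Measure.prod_prod, measure_univ, mul_one]

theorem entH_map_congr {Ω E : Type*} [MeasurableSpace Ω] [MeasurableSpace E]
    (μ : Measure Ω) [IsProbabilityMeasure μ] (φ : Ω → E) (hφ : Measurable φ)
    {κ : Type*} [Fintype κ] [MeasurableSpace κ] [MeasurableSingletonClass κ]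
    (W : E → κ) (hW : Measurable W) (V : Ω → κ) (h : ∀ ω, W (φ ω) = V ω) :
    entH (μ.map φ) W = entH μ V := by
  rw [entH_map μ (μ.map φ) φ hφ W hW rfl]
  exact congrArg _ (funext h)

/-- lower bound `L′₁ʳ` of Theorem 1: there is an extension carrying `Y`
with `I(Y;S') = 0`, `I(Y;X') ≤ H(X|S)` and
`I(Y;T') ≥ H(T|S) - H(S|T)` (equivalently `I(Y;T') ≥ H(T) - H(S)`). -/
theorem lower_bound_L1r_prime
    {Ω 𝒮 𝒳 𝒯 : Type*} [MeasurableSpace Ω]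
    [Fintype 𝒮] [MeasurableSpace 𝒮] [DiscreteMeasurableSpace 𝒮]
    [Fintype 𝒳] [MeasurableSpace 𝒳] [DiscreteMeasurableSpace 𝒳]
    [Fintype 𝒯] [MeasurableSpace 𝒯] [DiscreteMeasurableSpace 𝒯]
    (μ : Measure Ω) [IsProbabilityMeasure μ]
    (S : Ω → 𝒮) (X : Ω → 𝒳) (T : Ω → 𝒯)
    (hS : Measurable S) (hX : Measurable X) (hT : Measurable T) :
    ∃ (Ω' : Type) (_ : MeasurableSpace Ω') (μ' : Measure Ω') (n : ℕ)
      (S' : Ω' → 𝒮) (X' : Ω' → 𝒳) (T' : Ω' → 𝒯) (Y : Ω' → Fin n),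
      IsProbabilityMeasure μ' ∧
      Measurable S' ∧ Measurable X' ∧ Measurable T' ∧ Measurable Y ∧
      μ'.map (fun ω => (S' ω, X' ω, T' ω)) = μ.map (fun ω => (S ω, X ω, T ω)) ∧
      mutInf μ' Y S' = 0 ∧
      mutInf μ' Y X' ≤ condEntH μ X S ∧
      mutInf μ' Y T' ≥ condEntH μ T S - condEntH μ S T ∧
      mutInf μ' Y T' ≥ entH μ T - entH μ S := by
  classical
  -- encode into a Type-0 finite base space
  set a := Fintype.card 𝒮 with ha
  set eS : 𝒮 ≃ Fin (Fintype.card 𝒮) := Fintype.equivFin 𝒮 with heS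
  set eX : 𝒳 ≃ Fin (Fintype.card 𝒳) := Fintype.equivFin 𝒳 with heX
  set eT : 𝒯 ≃ Fin (Fintype.card 𝒯) := Fintype.equivFin 𝒯 with heT
  set Ωb : Type := Fin (Fintype.card 𝒮) × Fin (Fintype.card 𝒳) × Fin (Fintype.card 𝒯) with hΩb
  set φ : Ω → Ωb := fun ω => (eS (S ω), eX (X ω), eT (T ω)) with hφdef
  have hφ : Measurable φ := by
    refine Measurable.prodMk ?_ (Measurable.prodMk ?_ ?_)
    · exact (Measurable.of_discrete (f := eS)).comp hS
    · exact (Measurable.of_discrete (f := eX)).comp hX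
    · exact (Measurable.of_discrete (f := eT)).comp hT
  set ρ : Measure Ωb := μ.map φ with hρdef
  haveI hρp : IsProbabilityMeasure ρ := Measure.isProbabilityMeasure_map hφ.aemeasurable
  set S₀ : Ωb → 𝒮 := fun w => eS.symm w.1 with hS₀
  set X₀ : Ωb → 𝒳 := fun w => eX.symm w.2.1 with hX₀
  set T₀ : Ωb → 𝒯 := fun w => eT.symm w.2.2 with hT₀
  set XT₀ : Ωb → 𝒳 × 𝒯 := fun w => (X₀ w, T₀ w) with hXT₀
  set c : 𝒮 → ENNReal := fun s => ρ (S₀ ⁻¹' {s}) with hc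
  -- conditional measures
  set ν : Fin (Fintype.card 𝒮) → Measure Ωb := fun i =>
    if c (eS.symm i) = 0 then ρ
    else (c (eS.symm i))⁻¹ • ρ.restrict (S₀ ⁻¹' {eS.symm i}) with hν
  haveI hνp : ∀ i, IsProbabilityMeasure (ν i) := by
    intro i
    rw [hν]
    dsimp only
    split_ifs with h0
    · infer_instance
    · constructor
      rw [Measure.smul_apply, Measure.restrict_apply MeasurableSet.univ, Set.univ_inter,
        smul_eq_mul]
      exact ENNReal.inv_mul_cancel h0 (measure_ne_top ρ _)
  -- the extension space
  set Ω' : Type := Ωb × (Fin (Fintype.card 𝒮) → Ωb) with hΩ'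
  set μ' : Measure Ω' := ρ.prod (Measure.pi ν) with hμ'
  haveI : IsProbabilityMeasure μ' := by rw [hμ']; infer_instance
  set S' : Ω' → 𝒮 := fun ω' => S₀ ω'.1 with hS'
  set X' : Ω' → 𝒳 := fun ω' => X₀ ω'.1 with hX'
  set T' : Ω' → 𝒯 := fun ω' => T₀ ω'.1 with hT'
  set Y₀ : Ω' → (Fin (Fintype.card 𝒮) → 𝒳 × 𝒯) := fun ω' i =>
    if eS (S₀ ω'.1) = i then (X₀ ω'.1, T₀ ω'.1) else (X₀ (ω'.2 i), T₀ (ω'.2 i)) with hY₀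
  set n := Fintype.card (Fin (Fintype.card 𝒮) → 𝒳 × 𝒯) with hn
  set e : (Fin (Fintype.card 𝒮) → 𝒳 × 𝒯) ≃ Fin n := Fintype.equivFin _ with he
  set Y : Ω' → Fin n := fun ω' => e (Y₀ ω') with hY
  -- trivial measurability (everything discrete)
  have hS'm : Measurable S' := Measurable.of_discrete
  have hX'm : Measurable X' := Measurable.of_discrete
  have hT'm : Measurable T' := Measurable.of_discrete
  have hYm : Measurable Y := Measurable.of_discrete

  -- functional relation: (X',T') is a function of (Y, S')
  have hXTrel : ∀ ω' : Ω', (X' ω', T' ω') = e.symm (Y ω') (eS (S' ω')) := by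
    intro ω'
    show (X' ω', T' ω') = e.symm (e (Y₀ ω')) (eS (S' ω'))
    rw [Equiv.symm_apply_apply]
    show (X' ω', T' ω') = if eS (S₀ ω'.1) = eS (S' ω') then (X₀ ω'.1, T₀ ω'.1)
      else (X₀ (ω'.2 (eS (S' ω'))), T₀ (ω'.2 (eS (S' ω'))))
    rw [if_pos rfl]
  -- conditional single-slice distribution
  set m : Fin (Fintype.card 𝒮) → (𝒳 × 𝒯) → ENNReal := fun i v => ν i (XT₀ ⁻¹' {v}) with hm
  have hcond : ∀ (s₀ : 𝒮) (v : 𝒳 × 𝒯),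
      ρ (S₀ ⁻¹' {s₀} ∩ XT₀ ⁻¹' {v}) = c s₀ * m (eS s₀) v := by
    intro s₀ v
    rw [hm]
    dsimp only
    rw [hν]
    dsimp only
    rw [Equiv.symm_apply_apply]
    split_ifs with h0
    · have hz : ρ (S₀ ⁻¹' {s₀} ∩ XT₀ ⁻¹' {v}) = 0 :=
        le_antisymm (le_trans (measure_mono Set.inter_subset_left) (le_of_eq h0)) zero_le
      rw [hz, hc] at *
      rw [h0, zero_mul]
    · rw [Measure.smul_apply, smul_eq_mul, Measure.restrict_apply MeasurableSet.of_discrete,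
        ← mul_assoc, ENNReal.mul_inv_cancel h0 (measure_ne_top _ _), one_mul, Set.inter_comm]
  -- the key joint distribution computation
  have keyJoint : ∀ (s₀ : 𝒮) (g : Fin (Fintype.card 𝒮) → 𝒳 × 𝒯),
      μ' ((fun ω' => (S' ω', Y₀ ω')) ⁻¹' {(s₀, g)}) = c s₀ * ∏ i, m i (g i) := by
    intro s₀ g
    have hset : (fun ω' => (S' ω', Y₀ ω')) ⁻¹' {(s₀, g)}
        = (S₀ ⁻¹' {s₀} ∩ XT₀ ⁻¹' {g (eS s₀)}) ×ˢ
          (Set.univ.pi fun i => if i = eS s₀ then Set.univ else XT₀ ⁻¹' {g i}) := by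
      ext ⟨w, f⟩
      constructor
      · intro h
        have h' : (S' (w, f), Y₀ (w, f)) = (s₀, g) := h
        have h1' : S₀ w = s₀ := congrArg Prod.fst h'
        have h2' : ∀ i, (if eS (S₀ w) = i then (X₀ w, T₀ w) else (X₀ (f i), T₀ (f i))) = g i :=
          fun i => congrFun (congrArg Prod.snd h') i
        refine ⟨⟨h1', ?_⟩, ?_⟩
        · have h3 := h2' (eS s₀)
          rw [h1', if_pos rfl] at h3
          exact h3
        · intro i _
          show f i ∈ (if i = eS s₀ then (Set.univ : Set Ωb) else XT₀ ⁻¹' {g i})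
          by_cases hi : i = eS s₀
          · rw [if_pos hi]; trivial
          · rw [if_neg hi]
            have h3 := h2' i
            rw [h1', if_neg (fun hh => hi hh.symm)] at h3
            exact h3
      · rintro ⟨⟨h1, h2⟩, h3⟩
        have h1' : S₀ w = s₀ := h1
        have h2' : XT₀ w = g (eS s₀) := h2
        have hY0g : Y₀ (w, f) = g := by
          funext i
          show (if eS (S₀ w) = i then (X₀ w, T₀ w) else (X₀ (f i), T₀ (f i))) = g i
          by_cases hi : i = eS s₀
          · rw [h1', hi, if_pos rfl]
            exact h2'
          · rw [h1', if_neg (fun hh => hi hh.symm)]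
            have h4 : f i ∈ (if i = eS s₀ then (Set.univ : Set Ωb) else XT₀ ⁻¹' {g i}) :=
              h3 i (Set.mem_univ i)
            rw [if_neg hi] at h4
            exact h4
        show (S' (w, f), Y₀ (w, f)) = (s₀, g)
        rw [show S' (w, f) = S₀ w from rfl, h1', hY0g]
    rw [hset, hμ', Measure.prod_prod, Measure.pi_pi, hcond s₀ (g (eS s₀))]
    have hfac : ∀ i, ν i (if i = eS s₀ then Set.univ else XT₀ ⁻¹' {g i})
        = if i = eS s₀ then 1 else m i (g i) := by
      intro i
      rw [apply_ite (ν i), measure_univ, hm]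
    rw [Finset.prod_congr rfl fun i _ => hfac i]
    have hprod : ∏ i, (if i = eS s₀ then (1 : ENNReal) else m i (g i))
        = ∏ i ∈ univ.erase (eS s₀), m i (g i) := by
      rw [← Finset.mul_prod_erase univ _ (mem_univ (eS s₀)), if_pos rfl, one_mul]
      exact Finset.prod_congr rfl fun i hi => if_neg (Finset.ne_of_mem_erase hi)
    rw [hprod, mul_assoc, Finset.mul_prod_erase univ (fun i => m i (g i)) (mem_univ (eS s₀))]
  -- marginals
  have keyS : ∀ s : 𝒮, μ' (S' ⁻¹' {s}) = c s := by
    intro s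
    have hset : S' ⁻¹' {s} = (S₀ ⁻¹' {s}) ×ˢ (Set.univ : Set (Fin (Fintype.card 𝒮) → Ωb)) := by
      ext ⟨w, f⟩
      exact ⟨fun h => ⟨h, trivial⟩, fun h => h.1⟩
    rw [hset, hμ', Measure.prod_prod, measure_univ, mul_one, hc]
  have hsumc : ∑ s : 𝒮, c s = 1 :=
    sum_measure_preimage_one ρ S₀ Measurable.of_discrete
  have keyY0 : ∀ g, μ' (Y₀ ⁻¹' {g}) = ∏ i, m i (g i) := by
    intro g
    have hset : Y₀ ⁻¹' {g} = ⋃ s₀ ∈ (univ : Finset 𝒮),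
        (fun ω' => (S' ω', Y₀ ω')) ⁻¹' {(s₀, g)} := by
      ext ω'
      constructor
      · intro h
        have h' : Y₀ ω' = g := h
        exact Set.mem_iUnion₂.mpr ⟨S' ω', mem_univ _,
          show (S' ω', Y₀ ω') = (S' ω', g) from by rw [h']⟩
      · intro h
        obtain ⟨s₀, -, h2⟩ := Set.mem_iUnion₂.mp h
        have h2' : (S' ω', Y₀ ω') = (s₀, g) := h2
        exact congrArg Prod.snd h2'
    rw [hset, measure_biUnion_finset]
    · rw [Finset.sum_congr rfl fun s₀ (_ : s₀ ∈ univ) => keyJoint s₀ g, ← Finset.sum_mul,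
        hsumc, one_mul]
    · intro s₁ _ s₂ _ hne
      refine Set.disjoint_left.mpr fun ω' h1 h2 => hne ?_
      simp only [Set.mem_preimage, Set.mem_singleton_iff, Prod.mk.injEq] at h1 h2
      rw [← h1.1, ← h2.1]
    · exact fun s₀ _ => MeasurableSet.of_discrete
  have keyYk : ∀ k : Fin n, μ' (Y ⁻¹' {k}) = ∏ i, m i (e.symm k i) := by
    intro k
    have hset : Y ⁻¹' {k} = Y₀ ⁻¹' {e.symm k} := by
      ext ω'
      simp only [Set.mem_preimage, Set.mem_singleton_iff, hY]
      exact ⟨fun h => by rw [← h, Equiv.symm_apply_apply],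
        fun h => by rw [h, Equiv.apply_symm_apply]⟩
    rw [hset, keyY0]
  have keyPair : ∀ (k : Fin n) (s : 𝒮),
      μ' ((fun ω' => (Y ω', S' ω')) ⁻¹' {(k, s)}) = μ' (Y ⁻¹' {k}) * μ' (S' ⁻¹' {s}) := by
    intro k s
    have hset : (fun ω' => (Y ω', S' ω')) ⁻¹' {(k, s)}
        = (fun ω' => (S' ω', Y₀ ω')) ⁻¹' {(s, e.symm k)} := by
      ext ω'
      simp only [Set.mem_preimage, Set.mem_singleton_iff, Prod.mk.injEq, hY]
      constructor
      · rintro ⟨h1, h2⟩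
        exact ⟨h2, by rw [← h1, Equiv.symm_apply_apply]⟩
      · rintro ⟨h1, h2⟩
        exact ⟨by rw [h2, Equiv.apply_symm_apply], h1⟩
    rw [hset, keyJoint s (e.symm k), keyYk k, keyS s, mul_comm]
  -- entropy transfers to the base/original space
  have trS : entH μ' S' = entH ρ S₀ := entH_fst ρ (Measure.pi ν) S₀
  have hentS : entH μ' S' = entH μ S := by
    refine trS.trans ?_
    rw [hρdef]
    refine entH_map_congr μ φ hφ S₀ Measurable.of_discrete S fun ω => ?_
    simp [hS₀, hφdef]
  have trT : entH μ' T' = entH ρ T₀ := entH_fst ρ (Measure.pi ν) T₀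
  have hentT : entH μ' T' = entH μ T := by
    refine trT.trans ?_
    rw [hρdef]
    refine entH_map_congr μ φ hφ T₀ Measurable.of_discrete T fun ω => ?_
    simp [hT₀, hφdef]
  have hentXS : entH μ' (fun ω' => (X' ω', S' ω')) = entH μ (fun ω => (X ω, S ω)) := by
    have h1 : entH μ' (fun ω' => (X' ω', S' ω')) = entH ρ (fun w => (X₀ w, S₀ w)) :=
      entH_fst ρ (Measure.pi ν) (fun w => (X₀ w, S₀ w))
    refine h1.trans ?_
    rw [hρdef]
    refine entH_map_congr μ φ hφ _ Measurable.of_discrete _ fun ω => ?_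
    simp [hS₀, hX₀, hφdef]
  have hswapTS : entH μ (fun ω => (T ω, S ω)) = entH μ (fun ω => (S ω, T ω)) :=
    entH_comp_eq μ (fun ω => (S ω, T ω)) (hS.prodMk hT) Prod.swap Prod.swap fun ω => rfl
  -- independence of Y and S'
  have hpairYS : entH μ' (fun ω' => (Y ω', S' ω')) = entH μ' Y + entH μ' S' :=
    entH_pair_of_indep μ' Y S' hYm hS'm keyPair
  refine ⟨Ω', inferInstance, μ', n, S', X', T', Y, inferInstance, hS'm, hX'm, hT'm, hYm,
    ?_, ?_, ?_, ?_, ?_⟩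
  · -- map equality
    have h1 : (fun ω' : Ω' => (S' ω', X' ω', T' ω'))
        = (fun w : Ωb => (S₀ w, X₀ w, T₀ w)) ∘ Prod.fst := rfl
    rw [h1, ← Measure.map_map Measurable.of_discrete measurable_fst]
    have h2 : μ'.map Prod.fst = ρ := by
      rw [hμ', Measure.map_fst_prod, measure_univ, one_smul]
    rw [h2, hρdef, Measure.map_map Measurable.of_discrete hφ]
    refine congrArg (fun f => Measure.map f μ) (funext fun ω => ?_)
    simp [hS₀, hX₀, hT₀, hφdef]
  · -- I(Y;S') = 0
    unfold mutInf
    rw [hpairYS]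
    ring
  · -- I(Y;X') ≤ H(X|S)
    have sub := entH_submod μ' Y X' S' hYm hX'm hS'm
    have h3 : ∀ ω', X' ω' = (e.symm (Y ω') (eS (S' ω'))).1 :=
      fun ω' => congrArg Prod.fst (hXTrel ω')
    have htriple : entH μ' (fun ω' => (Y ω', X' ω', S' ω'))
        = entH μ' (fun ω' => (Y ω', S' ω')) := by
      have h2 := entH_comp_eq μ' (fun ω' => (Y ω', S' ω')) (hYm.prodMk hS'm)
        (fun p => (p.1, (e.symm p.1 (eS p.2)).1, p.2)) (fun q => (q.1, q.2.2)) fun ω' => rfl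
      rw [show (fun ω' => (Y ω', X' ω', S' ω'))
          = (fun ω' => (Y ω', (e.symm (Y ω') (eS (S' ω'))).1, S' ω')) from
        funext fun ω' => by rw [← h3 ω']]
      exact h2
    unfold mutInf condEntH
    linarith [sub, htriple, hpairYS, hentXS, hentS]
  · -- I(Y;T') ≥ H(T|S) - H(S|T)
    have h3 : ∀ ω', T' ω' = (e.symm (Y ω') (eS (S' ω'))).2 :=
      fun ω' => congrArg Prod.snd (hXTrel ω')
    have hYT : entH μ' (fun ω' => (Y ω', T' ω')) ≤ entH μ' (fun ω' => (Y ω', S' ω')) := by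
      have h2 := entH_comp_le μ' (fun ω' => (Y ω', S' ω')) (hYm.prodMk hS'm)
        (fun p => (p.1, (e.symm p.1 (eS p.2)).2))
      rw [show (fun ω' => (fun p : Fin n × 𝒮 => (p.1, (e.symm p.1 (eS p.2)).2))
          ((fun ω' => (Y ω', S' ω')) ω'))
          = (fun ω' => (Y ω', T' ω')) from funext fun ω' => by
        show (Y ω', (e.symm (Y ω') (eS (S' ω'))).2) = (Y ω', T' ω')
        rw [← h3 ω']] at h2
      exact h2
    unfold mutInf condEntH
    linarith [hYT, hpairYS, hentT, hentS, hswapTS]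
  · -- I(Y;T') ≥ H(T) - H(S)
    have h3 : ∀ ω', T' ω' = (e.symm (Y ω') (eS (S' ω'))).2 :=
      fun ω' => congrArg Prod.snd (hXTrel ω')
    have hYT : entH μ' (fun ω' => (Y ω', T' ω')) ≤ entH μ' (fun ω' => (Y ω', S' ω')) := by
      have h2 := entH_comp_le μ' (fun ω' => (Y ω', S' ω')) (hYm.prodMk hS'm)
        (fun p => (p.1, (e.symm p.1 (eS p.2)).2))
      rw [show (fun ω' => (fun p : Fin n × 𝒮 => (p.1, (e.symm p.1 (eS p.2)).2))
          ((fun ω' => (Y ω', S' ω')) ω'))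
          = (fun ω' => (Y ω', T' ω')) from funext fun ω' => by
        show (Y ω', (e.symm (Y ω') (eS (S' ω'))).2) = (Y ω', T' ω')
        rw [← h3 ω']] at h2
      exact h2
    unfold mutInf
    linarith [hYT, hpairYS, hentT, hentS]

end Main
end

section
/- Let U, Z, W be discrete random variables with finite ranges on a common probability space, let α ∈ [0,1], let B be a Bernoulli(α) random variable independent of (U, Z, W), and let c be a symbol not in the range of U. Define U' = U if B = 1 and U' = c if B = 0. Then I(U';Z|W) = α·I(U;Z|W), and in particular (taking W constant) I(U';Z) = α·I(U;Z). -/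
open MeasureTheory ProbabilityTheory

lemma mullog (x y : ℝ) (hx : 0 ≤ x) (hy : 0 ≤ y) :
    (x * y) * Real.logb 2 (x * y)
      = y * (x * Real.logb 2 x) + x * (y * Real.logb 2 y) := by
  rcases eq_or_lt_of_le hx with h | h
  · simp [← h]
  rcases eq_or_lt_of_le hy with h' | h'
  · simp [← h']
  rw [Real.logb_mul (ne_of_gt h) (ne_of_gt h')]
  ring

lemma entH_master {Ω 𝒰 β : Type*} [MeasurableSpace Ω]
    [Fintype 𝒰] [MeasurableSpace 𝒰] [DiscreteMeasurableSpace 𝒰]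
    [Fintype β] [MeasurableSpace β] [DiscreteMeasurableSpace β]
    (μ : Measure Ω) [IsProbabilityMeasure μ]
    (U : Ω → 𝒰) (Y : Ω → β) (B : Ω → Bool) (hU : Measurable U) (hY : Measurable Y) (hB : Measurable B)
    (α : ℝ) (hα0 : 0 ≤ α) (hα1 : α ≤ 1)
    (hBern : μ (B ⁻¹' {true}) = ENNReal.ofReal α)
    (hind : IndepFun B (fun ω => (U ω, Y ω)) μ)
    (c : 𝒰) (hc : c ∉ Set.range U)
    (U' : Ω → 𝒰) (hU' : ∀ ω, U' ω = if B ω then U ω else c) :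
    entH μ (fun ω => (U' ω, Y ω))
      = α * entH μ (fun ω => (U ω, Y ω)) + (1 - α) * entH μ Y
        - (α * Real.logb 2 α + (1 - α) * Real.logb 2 (1 - α)) := by
  classical
  have hα1' : 0 ≤ 1 - α := by linarith
  have hBf : μ (B ⁻¹' {false}) = ENNReal.ofReal (1 - α) := by
    have hcpl : B ⁻¹' {false} = (B ⁻¹' {true})ᶜ := by ext ω; cases h : B ω <;> simp [h]
    rw [hcpl, measure_compl (hB (measurableSet_singleton _)) (measure_ne_top μ _), hBern,
      measure_univ, ENNReal.ofReal_sub 1 hα0, ENNReal.ofReal_one]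
  have hindY : IndepFun B Y μ := by
    have := hind.comp (measurable_id (α := Bool)) (measurable_snd (α := 𝒰) (β := β))
    exact this
  -- set identities
  have key1 : ∀ a y, a ≠ c →
      (fun ω => (U' ω, Y ω)) ⁻¹' {(a, y)}
        = B ⁻¹' {true} ∩ (fun ω => (U ω, Y ω)) ⁻¹' {(a, y)} := by
    intro a y ha
    ext ω
    cases h : B ω <;> simp [hU' ω, h, Prod.ext_iff, Ne.symm ha]
  have key2 : ∀ y,
      (fun ω => (U' ω, Y ω)) ⁻¹' {(c, y)} = B ⁻¹' {false} ∩ Y ⁻¹' {y} := by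
    intro y
    ext ω
    have hUω : U ω ≠ c := fun h => hc ⟨ω, h⟩
    cases h : B ω <;> simp [hU' ω, h, Prod.ext_iff, hUω]
  -- real-valued distributions
  set p : 𝒰 × β → ℝ := fun x => (μ ((fun ω => (U ω, Y ω)) ⁻¹' {x})).toReal with hp
  set q : β → ℝ := fun y => (μ (Y ⁻¹' {y})).toReal with hq
  set r : 𝒰 × β → ℝ := fun x => (μ ((fun ω => (U' ω, Y ω)) ⁻¹' {x})).toReal with hr
  have r1 : ∀ a y, a ≠ c → r (a, y) = α * p (a, y) := by
    intro a y ha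
    rw [hr]
    simp only
    rw [key1 a y ha,
      hind.measure_inter_preimage_eq_mul _ _ (measurableSet_singleton _)
        (measurableSet_singleton _), hBern, ENNReal.toReal_mul,
      ENNReal.toReal_ofReal hα0]
  have r2 : ∀ y, r (c, y) = (1 - α) * q y := by
    intro y
    rw [hr]
    simp only
    rw [key2 y,
      hindY.measure_inter_preimage_eq_mul _ _ (measurableSet_singleton _)
        (measurableSet_singleton _), hBf, ENNReal.toReal_mul,
      ENNReal.toReal_ofReal hα1']
  have p0 : ∀ y, p (c, y) = 0 := by
    intro y
    have : (fun ω => (U ω, Y ω)) ⁻¹' {(c, y)} = ∅ := by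
      ext ω
      have hUω : U ω ≠ c := fun h => hc ⟨ω, h⟩
      simp [Prod.ext_iff, hUω]
    simp [hp, this]
  have pnn : ∀ x, 0 ≤ p x := fun x => ENNReal.toReal_nonneg
  have qnn : ∀ y, 0 ≤ q y := fun y => ENNReal.toReal_nonneg
  have sp : ∑ x : 𝒰 × β, p x = 1 := by
    have h1 : ∑ x : 𝒰 × β, μ ((fun ω => (U ω, Y ω)) ⁻¹' {x}) = 1 := by
      rw [sum_measure_preimage_singleton _
        (fun b _ => (hU.prodMk hY) (measurableSet_singleton b))]
      simp
    rw [hp]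
    rw [← ENNReal.toReal_sum (fun x _ => measure_ne_top μ _), h1, ENNReal.toReal_one]
  have sq : ∑ y : β, q y = 1 := by
    have h1 : ∑ y : β, μ (Y ⁻¹' {y}) = 1 := by
      rw [sum_measure_preimage_singleton _ (fun b _ => hY (measurableSet_singleton b))]
      simp
    rw [hq]
    rw [← ENNReal.toReal_sum (fun x _ => measure_ne_top μ _), h1, ENNReal.toReal_one]
  -- pointwise expansion
  have expand : ∀ x : 𝒰 × β,
      r x * Real.logb 2 (r x)
        = ((α * Real.logb 2 α) * p x + α * (p x * Real.logb 2 (p x)))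
          + (if x.1 = c then
              (1 - α) * Real.logb 2 (1 - α) * q x.2
                + (1 - α) * (q x.2 * Real.logb 2 (q x.2))
            else 0) := by
    rintro ⟨a, y⟩
    by_cases h : a = c
    · subst h
      rw [r2 y, p0 y, if_pos rfl]
      have := mullog (1 - α) (q y) hα1' (qnn y)
      linarith [this]
    · simp only [if_neg h, add_zero]
      rw [r1 a y h]
      have := mullog α (p (a, y)) hα0 (pnn (a, y))
      linarith [this]
  -- sum it up
  have hsum : ∑ x : 𝒰 × β, r x * Real.logb 2 (r x)
      = (α * Real.logb 2 α) + α * (∑ x : 𝒰 × β, p x * Real.logb 2 (p x))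
        + ((1 - α) * Real.logb 2 (1 - α)
            + (1 - α) * (∑ y : β, q y * Real.logb 2 (q y))) := by
    rw [Finset.sum_congr rfl fun x _ => expand x, Finset.sum_add_distrib,
      Finset.sum_add_distrib, ← Finset.mul_sum, ← Finset.mul_sum, sp, mul_one]
    congr 1
    rw [Fintype.sum_prod_type]
    have hinner : ∀ a : 𝒰,
        (∑ y : β, if a = c then
            (1 - α) * Real.logb 2 (1 - α) * q y + (1 - α) * (q y * Real.logb 2 (q y))
          else 0)
          = if a = c then
              (1 - α) * Real.logb 2 (1 - α)
                + (1 - α) * (∑ y : β, q y * Real.logb 2 (q y))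
            else 0 := by
      intro a
      by_cases h : a = c <;>
        simp [h, Finset.sum_add_distrib, ← Finset.mul_sum, sq]
    rw [Finset.sum_congr rfl fun a _ => hinner a]
    simp
  have hE : entH μ (fun ω => (U' ω, Y ω)) = -∑ x : 𝒰 × β, r x * Real.logb 2 (r x) := rfl
  have hE1 : entH μ (fun ω => (U ω, Y ω)) = -∑ x : 𝒰 × β, p x * Real.logb 2 (p x) := rfl
  have hE2 : entH μ Y = -∑ y : β, q y * Real.logb 2 (q y) := rfl
  rw [hE, hsum, hE1, hE2]
  ring

lemma entH_unit {Ω : Type*} [MeasurableSpace Ω] (μ : Measure Ω) [IsProbabilityMeasure μ] :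
    entH μ (fun _ : Ω => ()) = 0 := by
  have : (fun _ : Ω => ()) ⁻¹' {()} = Set.univ := by ext ω; simp
  simp [entH, this]

lemma entH_pair_unit {Ω : Type*} [MeasurableSpace Ω] (μ : Measure Ω)
    {γ : Type*} [Fintype γ] (X : Ω → γ) :
    entH μ (fun ω => (X ω, ())) = entH μ X := by
  unfold entH
  congr 1
  rw [Fintype.sum_prod_type]
  refine Fintype.sum_congr _ _ fun a => ?_
  have : (fun ω => (X ω, ())) ⁻¹' {(a, ())} = X ⁻¹' {a} := by
    ext ω; simp [Prod.ext_iff]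
  simp [this]

lemma entH_assoc {Ω : Type*} [MeasurableSpace Ω] (μ : Measure Ω)
    {a b c : Type*} [Fintype a] [Fintype b] [Fintype c]
    (X : Ω → a) (Y : Ω → b) (Z : Ω → c) :
    entH μ (fun ω => ((X ω, Y ω), Z ω)) = entH μ (fun ω => (X ω, (Y ω, Z ω))) := by
  unfold entH
  congr 1
  refine Fintype.sum_equiv (Equiv.prodAssoc a b c) _ _ fun x => ?_
  obtain ⟨⟨p, q⟩, r⟩ := x
  have : (fun ω => ((X ω, Y ω), Z ω)) ⁻¹' {((p, q), r)}
      = (fun ω => (X ω, (Y ω, Z ω))) ⁻¹' {(p, (q, r))} := by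
    ext ω; simp [Prod.ext_iff, and_assoc]
  simp [Equiv.prodAssoc, this]

/-- randomization technique: if `B` is Bernoulli(α) independent of
`(U, Z, W)`, `c` is not in the range of `U`, and `U' = U` if `B` and `U' = c`
otherwise, then `I(U';Z|W) = α·I(U;Z|W)` and `I(U';Z) = α·I(U;Z)`. -/
theorem randomization_scaling
    {Ω 𝒰 𝒵 𝒲 : Type*} [MeasurableSpace Ω]
    [Fintype 𝒰] [MeasurableSpace 𝒰] [DiscreteMeasurableSpace 𝒰]
    [Fintype 𝒵] [MeasurableSpace 𝒵] [DiscreteMeasurableSpace 𝒵]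
    [Fintype 𝒲] [MeasurableSpace 𝒲] [DiscreteMeasurableSpace 𝒲]
    (μ : Measure Ω) [IsProbabilityMeasure μ]
    (U : Ω → 𝒰) (Z : Ω → 𝒵) (W : Ω → 𝒲) (B : Ω → Bool)
    (hU : Measurable U) (hZ : Measurable Z) (hW : Measurable W) (hB : Measurable B)
    (α : ℝ) (hα0 : 0 ≤ α) (hα1 : α ≤ 1)
    (hBern : μ (B ⁻¹' {true}) = ENNReal.ofReal α)
    (hindep : IndepFun B (fun ω => (U ω, Z ω, W ω)) μ)
    (c : 𝒰) (hc : c ∉ Set.range U)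
    (U' : Ω → 𝒰) (hU' : ∀ ω, U' ω = if B ω then U ω else c) :
    condMutInf μ U' Z W = α * condMutInf μ U Z W ∧
      mutInf μ U' Z = α * mutInf μ U Z := by
  have hindW : IndepFun B (fun ω => (U ω, W ω)) μ :=
    hindep.comp (measurable_id (α := Bool))
      (measurable_fst.prodMk measurable_snd.snd)
  have hindZW : IndepFun B (fun ω => (U ω, (Z ω, W ω))) μ := hindep
  have hindZ : IndepFun B (fun ω => (U ω, Z ω)) μ :=
    hindep.comp (measurable_id (α := Bool))
      (measurable_fst.prodMk measurable_snd.fst)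
  have hindUnit : IndepFun B (fun ω => (U ω, ())) μ :=
    hindep.comp (measurable_id (α := Bool))
      (measurable_fst.prodMk measurable_const)
  have hW' : entH μ (fun ω => (U' ω, W ω))
      = α * entH μ (fun ω => (U ω, W ω)) + (1 - α) * entH μ W
        - (α * Real.logb 2 α + (1 - α) * Real.logb 2 (1 - α)) :=
    entH_master μ U W B hU hW hB α hα0 hα1 hBern hindW c hc U' hU'
  have hZW' : entH μ (fun ω => (U' ω, (Z ω, W ω)))
      = α * entH μ (fun ω => (U ω, (Z ω, W ω)))
        + (1 - α) * entH μ (fun ω => (Z ω, W ω))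
        - (α * Real.logb 2 α + (1 - α) * Real.logb 2 (1 - α)) :=
    entH_master μ U (fun ω => (Z ω, W ω)) B hU (hZ.prodMk hW) hB α hα0 hα1 hBern
      hindZW c hc U' hU'
  have hZ' : entH μ (fun ω => (U' ω, Z ω))
      = α * entH μ (fun ω => (U ω, Z ω)) + (1 - α) * entH μ Z
        - (α * Real.logb 2 α + (1 - α) * Real.logb 2 (1 - α)) :=
    entH_master μ U Z B hU hZ hB α hα0 hα1 hBern hindZ c hc U' hU'
  have hu' : entH μ (fun ω => (U' ω, ()))
      = α * entH μ (fun ω => (U ω, ())) + (1 - α) * entH μ (fun _ : Ω => ())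
        - (α * Real.logb 2 α + (1 - α) * Real.logb 2 (1 - α)) :=
    entH_master μ U (fun _ => ()) B hU measurable_const hB α hα0 hα1 hBern
      hindUnit c hc U' hU'
  rw [entH_pair_unit μ U', entH_pair_unit μ U, entH_unit μ] at hu'
  constructor
  · unfold condMutInf condEntH
    rw [entH_assoc μ U' Z W, entH_assoc μ U Z W, hW', hZW']
    ring
  · unfold mutInf
    rw [hu', hZ']
    ring
end

section
/- Let S, X, T, Y be discrete random variables with finite ranges on a common probability space such that I(Y;(S,X)) = 0 and H(T|S,X,Y) = 0. Then I(Y;(X,T)|S) = H(T|X,S), and consequently I(Y;T|S) = H(T|X,S) − I(Y;X|S,T). -/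
open MeasureTheory ProbabilityTheory

noncomputable def entV {α : Type*} [Fintype α] (q : α → ℝ) : ℝ :=
  -∑ a, q a * Real.logb 2 (q a)

noncomputable def margOf {ι α : Type*} [Fintype ι] [DecidableEq α]
    (p : ι → ℝ) (f : ι → α) : α → ℝ :=
  fun a => ∑ i ∈ Finset.univ.filter (fun i => f i = a), p i

lemma sum_margOf {ι α : Type*} [Fintype ι] [Fintype α] [DecidableEq α]
    (p : ι → ℝ) (f : ι → α) : ∑ a, margOf p f a = ∑ i, p i :=
  Finset.sum_fiberwise _ f p

lemma margOf_nonneg {ι α : Type*} [Fintype ι] [DecidableEq α]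
    (p : ι → ℝ) (hp : ∀ i, 0 ≤ p i) (f : ι → α) (a : α) : 0 ≤ margOf p f a :=
  Finset.sum_nonneg fun i _ => hp i

lemma le_margOf {ι α : Type*} [Fintype ι] [DecidableEq α]
    (p : ι → ℝ) (hp : ∀ i, 0 ≤ p i) (f : ι → α) (i : ι) : p i ≤ margOf p f (f i) :=
  Finset.single_le_sum (fun j _ => hp j) (by simp)

lemma sum_marg_mul {ι α : Type*} [Fintype ι] [Fintype α] [DecidableEq α]
    (p : ι → ℝ) (f : ι → α) (G : α → ℝ) :
    ∑ a, margOf p f a * G a = ∑ i, p i * G (f i) := by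
  unfold margOf
  calc ∑ a, (∑ i ∈ Finset.univ.filter (fun i => f i = a), p i) * G a
      = ∑ a, ∑ i ∈ Finset.univ.filter (fun i => f i = a), p i * G (f i) := by
        refine Finset.sum_congr rfl fun a _ => ?_
        rw [Finset.sum_mul]
        refine Finset.sum_congr rfl fun i hi => ?_
        rw [(Finset.mem_filter.1 hi).2]
    _ = ∑ i, p i * G (f i) := Finset.sum_fiberwise _ f _

lemma margOf_comp {ι α β : Type*} [Fintype ι] [Fintype α] [DecidableEq α] [DecidableEq β]
    (p : ι → ℝ) (f : ι → α) (g : α → β) :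
    margOf p (fun i => g (f i)) = margOf (margOf p f) g := by
  funext b
  unfold margOf
  rw [Finset.sum_filter, Finset.sum_filter]
  calc ∑ i, (if g (f i) = b then p i else 0)
      = ∑ a, ∑ i ∈ Finset.univ.filter (fun i => f i = a), (if g (f i) = b then p i else 0) :=
        (Finset.sum_fiberwise _ f _).symm
    _ = ∑ a, (if g a = b then ∑ i ∈ Finset.univ.filter (fun i => f i = a), p i else 0) := by
        refine Finset.sum_congr rfl fun a _ => ?_
        by_cases h : g a = b
        · rw [if_pos h]
          refine Finset.sum_congr rfl fun i hi => ?_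
          rw [if_pos (by rw [(Finset.mem_filter.1 hi).2]; exact h)]
        · rw [if_neg h]
          refine Finset.sum_eq_zero fun i hi => ?_
          rw [if_neg (by rw [(Finset.mem_filter.1 hi).2]; exact h)]
    _ = _ := rfl

lemma entV_comp_inj {ι α β : Type*} [Fintype ι] [Fintype α] [Fintype β]
    [DecidableEq α] [DecidableEq β]
    (p : ι → ℝ) (f : ι → α) (e : α → β) (he : Function.Injective e) :
    entV (margOf p (fun i => e (f i))) = entV (margOf p f) := by
  rw [margOf_comp]
  set q := margOf p f with hq
  have h1 : ∀ a, margOf q e (e a) = q a := by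
    intro a
    refine Finset.sum_eq_single a (fun b hb hne => absurd (he (Finset.mem_filter.1 hb).2) hne)
      (fun h => absurd (Finset.mem_filter.2 ⟨Finset.mem_univ a, (rfl : e a = e a)⟩) h)
  have h2 : ∀ b, b ∉ Set.range e → margOf q e b = 0 := by
    intro b hb
    refine Finset.sum_eq_zero fun i hi => ?_
    exact absurd ⟨i, (Finset.mem_filter.1 hi).2⟩ hb
  unfold entV
  congr 1
  exact (Fintype.sum_of_injective e he (fun a => q a * Real.logb 2 (q a))
    (fun b => margOf q e b * Real.logb 2 (margOf q e b))
    (fun b hb => by rw [h2 b hb, zero_mul])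
    (fun a => by rw [h1 a])).symm

lemma margOf_snd {α γ : Type*} [Fintype α] [Fintype γ] [DecidableEq γ]
    (q : α × γ → ℝ) (c : γ) : margOf q Prod.snd c = ∑ a, q (a, c) := by
  unfold margOf
  rw [Finset.sum_filter, Fintype.sum_prod_type]
  simp

lemma entV_submod {A B C : Type*} [Fintype A] [Fintype B] [Fintype C]
    [DecidableEq A] [DecidableEq B] [DecidableEq C]
    (r : A × B × C → ℝ) (hr : ∀ x, 0 ≤ r x) (hsum : ∑ x, r x = 1) :
    entV r + entV (margOf r (fun x => x.2.2)) ≤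
      entV (margOf r (fun x => (x.1, x.2.2))) + entV (margOf r (fun x => (x.2.1, x.2.2))) := by
  have hL : (0:ℝ) < Real.log 2 := Real.log_pos one_lt_two
  set u : A × C → ℝ := margOf r (fun x => (x.1, x.2.2)) with hu
  set v : B × C → ℝ := margOf r (fun x => (x.2.1, x.2.2)) with hv
  set w : C → ℝ := margOf r (fun x => x.2.2) with hw
  set q : A × B × C → ℝ := fun x => u (x.1, x.2.2) * v (x.2.1, x.2.2) / w x.2.2 with hqdef
  have hu0 : ∀ y, 0 ≤ u y := margOf_nonneg r hr _
  have hv0 : ∀ y, 0 ≤ v y := margOf_nonneg r hr _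
  have hw0 : ∀ c, 0 ≤ w c := margOf_nonneg r hr _
  have hq0 : ∀ x, 0 ≤ q x := fun x =>
    div_nonneg (mul_nonneg (hu0 _) (hv0 _)) (hw0 _)
  have hwu : w = margOf u Prod.snd := margOf_comp r (fun x => (x.1, x.2.2)) Prod.snd
  have hwv : w = margOf v Prod.snd := margOf_comp r (fun x => (x.2.1, x.2.2)) Prod.snd
  have hAC : ∀ c, ∑ a, u (a, c) = w c := by
    intro c; rw [hwu]; exact (margOf_snd u c).symm
  have hBC : ∀ c, ∑ b, v (b, c) = w c := by
    intro c; rw [hwv]; exact (margOf_snd v c).symm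
  have hsw : ∑ c, w c = 1 := by rw [hw, sum_margOf]; exact hsum
  have hsq : ∑ x : A × B × C, q x ≤ 1 := by
    have step1 : ∑ x : A × B × C, q x = ∑ c, (∑ a, u (a, c)) * (∑ b, v (b, c)) / w c := by
      rw [Fintype.sum_prod_type]
      calc ∑ a, ∑ y : B × C, q (a, y)
          = ∑ a, ∑ b, ∑ c, q (a, b, c) := by
            refine Finset.sum_congr rfl fun a _ => ?_
            rw [Fintype.sum_prod_type]
        _ = ∑ a, ∑ c, ∑ b, q (a, b, c) := by
            refine Finset.sum_congr rfl fun a _ => Finset.sum_comm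
        _ = ∑ c, ∑ a, ∑ b, q (a, b, c) := Finset.sum_comm
        _ = ∑ c, (∑ a, u (a, c)) * (∑ b, v (b, c)) / w c := by
            refine Finset.sum_congr rfl fun c _ => ?_
            rw [Finset.sum_mul_sum, Finset.sum_div]
            refine Finset.sum_congr rfl fun a _ => ?_
            rw [Finset.sum_div]
    have step2 : ∀ c : C, (∑ a, u (a, c)) * (∑ b, v (b, c)) / w c ≤ w c := by
      intro c
      rw [hAC c, hBC c]
      rcases eq_or_lt_of_le (hw0 c) with h0 | hpos
      · rw [← h0]; simp
      · rw [mul_div_assoc, div_self (ne_of_gt hpos), mul_one]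
    calc ∑ x : A × B × C, q x = ∑ c, (∑ a, u (a, c)) * (∑ b, v (b, c)) / w c := step1
      _ ≤ ∑ c, w c := Finset.sum_le_sum fun c _ => step2 c
      _ = 1 := hsw
  have key : ∀ x : A × B × C, r x - q x ≤ r x * Real.log (r x) + r x * Real.log (w x.2.2)
      - r x * Real.log (u (x.1, x.2.2)) - r x * Real.log (v (x.2.1, x.2.2)) := by
    intro x
    rcases eq_or_lt_of_le (hr x) with h0 | hpos
    · rw [← h0]
      simpa using hq0 x
    · have hU : 0 < u (x.1, x.2.2) := lt_of_lt_of_le hpos (le_margOf r hr (fun x => (x.1, x.2.2)) x)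
      have hV : 0 < v (x.2.1, x.2.2) := lt_of_lt_of_le hpos (le_margOf r hr (fun x => (x.2.1, x.2.2)) x)
      have hW : 0 < w x.2.2 := lt_of_lt_of_le hpos (le_margOf r hr (fun x => x.2.2) x)
      have hQ : 0 < q x := div_pos (mul_pos hU hV) hW
      have hlog := Real.log_le_sub_one_of_pos (div_pos hQ hpos)
      have h1 : Real.log (q x / r x) = Real.log (q x) - Real.log (r x) :=
        Real.log_div (ne_of_gt hQ) (ne_of_gt hpos)
      have h2 : Real.log (q x) = Real.log (u (x.1, x.2.2)) + Real.log (v (x.2.1, x.2.2))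
          - Real.log (w x.2.2) := by
        rw [hqdef]
        simp only []
        rw [Real.log_div (ne_of_gt (mul_pos hU hV)) (ne_of_gt hW),
          Real.log_mul (ne_of_gt hU) (ne_of_gt hV)]
      have h3 := mul_le_mul_of_nonneg_left hlog (le_of_lt hpos)
      have h4 : r x * (q x / r x - 1) = q x - r x := by field_simp
      have h6 : r x * Real.log (q x / r x) = r x * Real.log (q x) - r x * Real.log (r x) := by
        rw [h1]; ring
      have h5 : r x * Real.log (q x) = r x * Real.log (u (x.1, x.2.2))
          + r x * Real.log (v (x.2.1, x.2.2)) - r x * Real.log (w x.2.2) := by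
        rw [h2]; ring
      linarith
  have hD : 0 ≤ ∑ x : A × B × C, (r x * Real.log (r x) + r x * Real.log (w x.2.2)
      - r x * Real.log (u (x.1, x.2.2)) - r x * Real.log (v (x.2.1, x.2.2))) := by
    calc (0:ℝ) = 1 - 1 := by ring
      _ ≤ ∑ x, r x - ∑ x : A × B × C, q x := by rw [hsum]; linarith
      _ = ∑ x : A × B × C, (r x - q x) := (Finset.sum_sub_distrib ..).symm
      _ ≤ _ := Finset.sum_le_sum fun x _ => key x
  simp only [Finset.sum_sub_distrib, Finset.sum_add_distrib] at hD
  -- now convert entV goal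
  have eu : ∑ y, u y * Real.logb 2 (u y) = ∑ x, r x * Real.logb 2 (u (x.1, x.2.2)) := by
    rw [hu]; exact sum_marg_mul r _ _
  have ev : ∑ y, v y * Real.logb 2 (v y) = ∑ x, r x * Real.logb 2 (v (x.2.1, x.2.2)) := by
    rw [hv]; exact sum_marg_mul r _ _
  have ew : ∑ c, w c * Real.logb 2 (w c) = ∑ x, r x * Real.logb 2 (w x.2.2) := by
    rw [hw]; exact sum_marg_mul r _ _
  unfold entV
  rw [eu, ev, ew]
  simp only [Real.logb, ← mul_div_assoc, ← Finset.sum_div]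
  have SU := Finset.sum_div Finset.univ (fun x : A × B × C => r x * Real.log (u (x.1, x.2.2))) (Real.log 2)
  have h2 : (∑ x : A × B × C, r x * Real.log (u (x.1, x.2.2)) + ∑ x : A × B × C, r x * Real.log (v (x.2.1, x.2.2))) / Real.log 2
      ≤ (∑ x : A × B × C, r x * Real.log (r x) + ∑ x : A × B × C, r x * Real.log (w x.2.2)) / Real.log 2 :=
    (div_le_div_iff_of_pos_right hL).mpr (by linarith)
  rw [add_div, add_div] at h2
  linarith

lemma cmi_nonneg {ι A B C : Type*} [Fintype ι] [Fintype A] [Fintype B] [Fintype C]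
    [DecidableEq A] [DecidableEq B] [DecidableEq C]
    (p : ι → ℝ) (hp : ∀ i, 0 ≤ p i) (h1 : ∑ i, p i = 1)
    (fa : ι → A) (fb : ι → B) (fc : ι → C) :
    entV (margOf p (fun i => (fa i, fb i, fc i))) + entV (margOf p fc) ≤
      entV (margOf p (fun i => (fa i, fc i))) + entV (margOf p (fun i => (fb i, fc i))) := by
  have h := entV_submod (margOf p (fun i => (fa i, fb i, fc i)))
      (margOf_nonneg p hp _) (by rw [sum_margOf]; exact h1)
  rw [← margOf_comp p _ (fun x : A × B × C => x.2.2),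
      ← margOf_comp p _ (fun x : A × B × C => (x.1, x.2.2)),
      ← margOf_comp p _ (fun x : A × B × C => (x.2.1, x.2.2))] at h
  exact h

lemma entV_const_unit {ι : Type*} [Fintype ι] (p : ι → ℝ) (h1 : ∑ i, p i = 1) :
    entV (margOf p (fun _ => ())) = 0 := by
  have hval : margOf p (fun _ => ()) () = 1 := by
    unfold margOf
    rw [Finset.filter_true_of_mem (fun _ _ => rfl)]
    exact h1
  unfold entV
  rw [Fintype.sum_unique]
  rw [hval, Real.logb_one, mul_zero, neg_zero]

open MeasureTheory in
lemma measure_preimage_toReal_eq {Ω Λ β : Type*} [MeasurableSpace Ω] [Fintype Λ]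
    [MeasurableSpace Λ] [MeasurableSingletonClass Λ] [DecidableEq β]
    (μ : Measure Ω) [IsFiniteMeasure μ] (W : Ω → Λ) (hW : Measurable W) (f : Λ → β) (b : β) :
    (μ ((fun ω => f (W ω)) ⁻¹' {b})).toReal
      = ∑ l ∈ Finset.univ.filter (fun l => f l = b), (μ (W ⁻¹' {l})).toReal := by
  have hset : (fun ω => f (W ω)) ⁻¹' {b}
      = ⋃ l ∈ Finset.univ.filter (fun l => f l = b), W ⁻¹' {l} := by
    ext ω
    simp [Set.mem_iUnion]
  rw [hset, measure_biUnion_finset ?hd ?hm]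
  case hd =>
    intro l _ l' _ hne
    refine Set.disjoint_left.2 fun ω h1 h2 => ?_
    exact hne (by simp_all)
  case hm =>
    intro l _
    exact hW (measurableSet_singleton l)
  exact ENNReal.toReal_sum fun l _ => measure_ne_top μ _

open MeasureTheory in
lemma entH_comp {Ω Λ β : Type*} [MeasurableSpace Ω] [Fintype Λ]
    [MeasurableSpace Λ] [MeasurableSingletonClass Λ] [Fintype β] [DecidableEq β]
    (μ : Measure Ω) [IsFiniteMeasure μ] (W : Ω → Λ) (hW : Measurable W) (f : Λ → β) :
    entH μ (fun ω => f (W ω)) = entV (margOf (fun l => (μ (W ⁻¹' {l})).toReal) f) := by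
  unfold entH entV margOf
  congr 1
  refine Finset.sum_congr rfl fun b _ => ?_
  rw [measure_preimage_toReal_eq μ W hW f b]

open MeasureTheory in
lemma sum_measure_preimage_toReal {Ω Λ : Type*} [MeasurableSpace Ω] [Fintype Λ]
    [MeasurableSpace Λ] [MeasurableSingletonClass Λ]
    (μ : Measure Ω) [IsProbabilityMeasure μ] (W : Ω → Λ) (hW : Measurable W) :
    ∑ l, (μ (W ⁻¹' {l})).toReal = 1 := by
  have h := measure_preimage_toReal_eq μ W hW (fun _ => ()) ()
  have hpre : (fun ω => (fun _ : Λ => ()) (W ω)) ⁻¹' {()} = Set.univ := by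
    ext ω; simp
  rw [hpre, measure_univ, ENNReal.toReal_one,
    Finset.filter_true_of_mem (fun _ _ => rfl)] at h
  exact h.symm


/-- if `I(Y;(S,X)) = 0` and `H(T|S,X,Y) = 0`, then
`I(Y;(X,T)|S) = H(T|X,S)` and `I(Y;T|S) = H(T|X,S) - I(Y;X|S,T)`. -/
theorem conditional_sfrl_expansion
    {Ω 𝒮 𝒳 𝒯 𝒴 : Type*} [MeasurableSpace Ω]
    [Fintype 𝒮] [MeasurableSpace 𝒮] [DiscreteMeasurableSpace 𝒮]
    [Fintype 𝒳] [MeasurableSpace 𝒳] [DiscreteMeasurableSpace 𝒳]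
    [Fintype 𝒯] [MeasurableSpace 𝒯] [DiscreteMeasurableSpace 𝒯]
    [Fintype 𝒴] [MeasurableSpace 𝒴] [DiscreteMeasurableSpace 𝒴]
    (μ : Measure Ω) [IsProbabilityMeasure μ]
    (S : Ω → 𝒮) (X : Ω → 𝒳) (T : Ω → 𝒯) (Y : Ω → 𝒴)
    (hS : Measurable S) (hX : Measurable X) (hT : Measurable T) (hY : Measurable Y)
    (hind : mutInf μ Y (fun ω => (S ω, X ω)) = 0)
    (hdet : condEntH μ T (fun ω => (S ω, X ω, Y ω)) = 0) :
    condMutInf μ Y (fun ω => (X ω, T ω)) S = condEntH μ T (fun ω => (X ω, S ω)) ∧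
      condMutInf μ Y T S =
        condEntH μ T (fun ω => (X ω, S ω)) -
          condMutInf μ Y X (fun ω => (S ω, T ω)) := by
  classical
  set W : Ω → 𝒮 × 𝒳 × 𝒯 × 𝒴 := fun ω => (S ω, X ω, T ω, Y ω) with hWdef
  have hW : Measurable W := hS.prodMk (hX.prodMk (hT.prodMk hY))
  set p : 𝒮 × 𝒳 × 𝒯 × 𝒴 → ℝ := fun l => (μ (W ⁻¹' {l})).toReal with hpdef
  have hp : ∀ l, 0 ≤ p l := fun l => ENNReal.toReal_nonneg
  have h1 : ∑ l, p l = 1 := sum_measure_preimage_toReal μ W hW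
  -- bridges to canonical entropies
  have bY : entH μ Y = entV (margOf p (fun l : 𝒮 × 𝒳 × 𝒯 × 𝒴 => l.2.2.2)) :=
    entH_comp μ W hW (fun l => l.2.2.2)
  have bS : entH μ S = entV (margOf p (fun l : 𝒮 × 𝒳 × 𝒯 × 𝒴 => l.1)) :=
    entH_comp μ W hW (fun l => l.1)
  have bSX : entH μ (fun ω => (S ω, X ω))
      = entV (margOf p (fun l : 𝒮 × 𝒳 × 𝒯 × 𝒴 => (l.1, l.2.1))) :=
    entH_comp μ W hW (fun l => (l.1, l.2.1))
  have bSXY : entH μ (fun ω => (S ω, X ω, Y ω))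
      = entV (margOf p (fun l : 𝒮 × 𝒳 × 𝒯 × 𝒴 => (l.1, l.2.1, l.2.2.2))) :=
    entH_comp μ W hW (fun l => (l.1, l.2.1, l.2.2.2))
  have bST : entH μ (fun ω => (S ω, T ω))
      = entV (margOf p (fun l : 𝒮 × 𝒳 × 𝒯 × 𝒴 => (l.1, l.2.2.1))) :=
    entH_comp μ W hW (fun l => (l.1, l.2.2.1))
  have bYSX : entH μ (fun ω => (Y ω, (S ω, X ω)))
      = entV (margOf p (fun l : 𝒮 × 𝒳 × 𝒯 × 𝒴 => (l.1, l.2.1, l.2.2.2))) :=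
    (entH_comp μ W hW (fun l => (l.2.2.2, (l.1, l.2.1)))).trans
      (entV_comp_inj p (fun l => (l.1, l.2.1, l.2.2.2)) (fun z => (z.2.2, (z.1, z.2.1)))
        (by intro a b h; simp_all [Prod.ext_iff]))
  have bTSXY : entH μ (fun ω => (T ω, (S ω, X ω, Y ω)))
      = entV (margOf p (fun l : 𝒮 × 𝒳 × 𝒯 × 𝒴 => l)) :=
    (entH_comp μ W hW (fun l => (l.2.2.1, (l.1, l.2.1, l.2.2.2)))).trans
      (entV_comp_inj p (fun l => l) (fun z => (z.2.2.1, (z.1, z.2.1, z.2.2.2)))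
        (by intro a b h; simp_all [Prod.ext_iff]))
  have bYS : entH μ (fun ω => (Y ω, S ω))
      = entV (margOf p (fun l : 𝒮 × 𝒳 × 𝒯 × 𝒴 => (l.1, l.2.2.2))) :=
    (entH_comp μ W hW (fun l => (l.2.2.2, l.1))).trans
      (entV_comp_inj p (fun l => (l.1, l.2.2.2)) (fun z => (z.2, z.1))
        (by intro a b h; simp_all [Prod.ext_iff]))
  have bXTS : entH μ (fun ω => ((X ω, T ω), S ω))
      = entV (margOf p (fun l : 𝒮 × 𝒳 × 𝒯 × 𝒴 => (l.1, l.2.1, l.2.2.1))) :=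
    (entH_comp μ W hW (fun l => ((l.2.1, l.2.2.1), l.1))).trans
      (entV_comp_inj p (fun l => (l.1, l.2.1, l.2.2.1)) (fun z => ((z.2.1, z.2.2), z.1))
        (by intro a b h; simp_all [Prod.ext_iff]))
  have bYXTS : entH μ (fun ω => ((Y ω, (X ω, T ω)), S ω))
      = entV (margOf p (fun l : 𝒮 × 𝒳 × 𝒯 × 𝒴 => l)) :=
    (entH_comp μ W hW (fun l => ((l.2.2.2, (l.2.1, l.2.2.1)), l.1))).trans
      (entV_comp_inj p (fun l => l) (fun z => ((z.2.2.2, (z.2.1, z.2.2.1)), z.1))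
        (by intro a b h; simp_all [Prod.ext_iff]))
  have bTXS : entH μ (fun ω => (T ω, (X ω, S ω)))
      = entV (margOf p (fun l : 𝒮 × 𝒳 × 𝒯 × 𝒴 => (l.1, l.2.1, l.2.2.1))) :=
    (entH_comp μ W hW (fun l => (l.2.2.1, (l.2.1, l.1)))).trans
      (entV_comp_inj p (fun l => (l.1, l.2.1, l.2.2.1)) (fun z => (z.2.2, (z.2.1, z.1)))
        (by intro a b h; simp_all [Prod.ext_iff]))
  have bXS : entH μ (fun ω => (X ω, S ω))
      = entV (margOf p (fun l : 𝒮 × 𝒳 × 𝒯 × 𝒴 => (l.1, l.2.1))) :=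
    (entH_comp μ W hW (fun l => (l.2.1, l.1))).trans
      (entV_comp_inj p (fun l => (l.1, l.2.1)) (fun z => (z.2, z.1))
        (by intro a b h; simp_all [Prod.ext_iff]))
  have bTS : entH μ (fun ω => (T ω, S ω))
      = entV (margOf p (fun l : 𝒮 × 𝒳 × 𝒯 × 𝒴 => (l.1, l.2.2.1))) :=
    (entH_comp μ W hW (fun l => (l.2.2.1, l.1))).trans
      (entV_comp_inj p (fun l => (l.1, l.2.2.1)) (fun z => (z.2, z.1))
        (by intro a b h; simp_all [Prod.ext_iff]))
  have bYTS : entH μ (fun ω => ((Y ω, T ω), S ω))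
      = entV (margOf p (fun l : 𝒮 × 𝒳 × 𝒯 × 𝒴 => (l.1, l.2.2.1, l.2.2.2))) :=
    (entH_comp μ W hW (fun l => ((l.2.2.2, l.2.2.1), l.1))).trans
      (entV_comp_inj p (fun l => (l.1, l.2.2.1, l.2.2.2)) (fun z => ((z.2.2, z.2.1), z.1))
        (by intro a b h; simp_all [Prod.ext_iff]))
  have bYST : entH μ (fun ω => (Y ω, (S ω, T ω)))
      = entV (margOf p (fun l : 𝒮 × 𝒳 × 𝒯 × 𝒴 => (l.1, l.2.2.1, l.2.2.2))) :=
    (entH_comp μ W hW (fun l => (l.2.2.2, (l.1, l.2.2.1)))).trans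
      (entV_comp_inj p (fun l => (l.1, l.2.2.1, l.2.2.2)) (fun z => (z.2.2, (z.1, z.2.1)))
        (by intro a b h; simp_all [Prod.ext_iff]))
  have bXST : entH μ (fun ω => (X ω, (S ω, T ω)))
      = entV (margOf p (fun l : 𝒮 × 𝒳 × 𝒯 × 𝒴 => (l.1, l.2.1, l.2.2.1))) :=
    (entH_comp μ W hW (fun l => (l.2.1, (l.1, l.2.2.1)))).trans
      (entV_comp_inj p (fun l => (l.1, l.2.1, l.2.2.1)) (fun z => (z.2.1, (z.1, z.2.2)))
        (by intro a b h; simp_all [Prod.ext_iff]))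
  have bYXST : entH μ (fun ω => ((Y ω, X ω), (S ω, T ω)))
      = entV (margOf p (fun l : 𝒮 × 𝒳 × 𝒯 × 𝒴 => l)) :=
    (entH_comp μ W hW (fun l => ((l.2.2.2, l.2.1), (l.1, l.2.2.1)))).trans
      (entV_comp_inj p (fun l => l) (fun z => ((z.2.2.2, z.2.1), (z.1, z.2.2.1)))
        (by intro a b h; simp_all [Prod.ext_iff]))
  -- nonnegativity facts
  have iA := cmi_nonneg p hp h1 (fun l => l.2.2.2) (fun l => l.1) (fun _ => ())
  have cY : entV (margOf p (fun i : 𝒮 × 𝒳 × 𝒯 × 𝒴 => (i.2.2.2, ())))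
      = entV (margOf p (fun l : 𝒮 × 𝒳 × 𝒯 × 𝒴 => l.2.2.2)) :=
    entV_comp_inj p (fun l => l.2.2.2) (fun y => (y, ()))
      (by intro a b h; simp_all [Prod.ext_iff])
  have cS : entV (margOf p (fun i : 𝒮 × 𝒳 × 𝒯 × 𝒴 => (i.1, ())))
      = entV (margOf p (fun l : 𝒮 × 𝒳 × 𝒯 × 𝒴 => l.1)) :=
    entV_comp_inj p (fun l => l.1) (fun y => (y, ()))
      (by intro a b h; simp_all [Prod.ext_iff])
  have cYS : entV (margOf p (fun i : 𝒮 × 𝒳 × 𝒯 × 𝒴 => (i.2.2.2, i.1, ())))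
      = entV (margOf p (fun l : 𝒮 × 𝒳 × 𝒯 × 𝒴 => (l.1, l.2.2.2))) :=
    entV_comp_inj p (fun l => (l.1, l.2.2.2)) (fun z => (z.2, z.1, ()))
      (by intro a b h; simp_all [Prod.ext_iff])
  have cU : entV (margOf p (fun _ : 𝒮 × 𝒳 × 𝒯 × 𝒴 => ())) = 0 := entV_const_unit p h1
  rw [cY, cS, cYS, cU] at iA
  have iB := cmi_nonneg p hp h1 (fun l => l.2.2.2) (fun l => l.2.1) (fun l => l.1)
  have dYXS : entV (margOf p (fun i : 𝒮 × 𝒳 × 𝒯 × 𝒴 => (i.2.2.2, i.2.1, i.1)))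
      = entV (margOf p (fun l : 𝒮 × 𝒳 × 𝒯 × 𝒴 => (l.1, l.2.1, l.2.2.2))) :=
    entV_comp_inj p (fun l => (l.1, l.2.1, l.2.2.2)) (fun z => (z.2.2, z.2.1, z.1))
      (by intro a b h; simp_all [Prod.ext_iff])
  have dYS : entV (margOf p (fun i : 𝒮 × 𝒳 × 𝒯 × 𝒴 => (i.2.2.2, i.1)))
      = entV (margOf p (fun l : 𝒮 × 𝒳 × 𝒯 × 𝒴 => (l.1, l.2.2.2))) :=
    entV_comp_inj p (fun l => (l.1, l.2.2.2)) (fun z => (z.2, z.1))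
      (by intro a b h; simp_all [Prod.ext_iff])
  have dXS : entV (margOf p (fun i : 𝒮 × 𝒳 × 𝒯 × 𝒴 => (i.2.1, i.1)))
      = entV (margOf p (fun l : 𝒮 × 𝒳 × 𝒯 × 𝒴 => (l.1, l.2.1))) :=
    entV_comp_inj p (fun l => (l.1, l.2.1)) (fun z => (z.2, z.1))
      (by intro a b h; simp_all [Prod.ext_iff])
  rw [dYXS, dYS, dXS] at iB
  simp only [condMutInf, condEntH, mutInf] at hind hdet ⊢
  rw [bY, bSX, bYSX] at hind
  rw [bTSXY, bSXY] at hdet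
  rw [bYS, bS, bXTS, bYXTS, bTXS, bXS, bTS, bYTS, bYST, bXST, bYXST, bST]
  constructor <;> linarith
end

section
/- Let (S, X, T) be discrete random variables with finite ranges such that X is a deterministic function of the pair (S, T) (equivalently, H(X|S,T) = 0). Then there exist a probability space carrying random variables (S', X', T', Y) with finite ranges such that (S', X', T') has the same joint distribution as (S, X, T), I(Y;S') = 0, I(X';Y|S',T') = 0, and I(Y;T'|S') = H(T|S). -/
open MeasureTheory ProbabilityTheory

/-- `u ↦ u * log₂ u`. -/
noncomputable def fl (u : ℝ) : ℝ := u * Real.logb 2 u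

lemma fl_zero : fl 0 = 0 := by simp [fl]

lemma fl_mul (u v : ℝ) (hu : 0 ≤ u) (hv : 0 ≤ v) :
    fl (u * v) = v * fl u + u * fl v := by
  rcases hu.eq_or_lt with h | h
  · simp [← h, fl]
  rcases hv.eq_or_lt with h' | h'
  · simp [← h', fl]
  unfold fl
  rw [Real.logb_mul h.ne' h'.ne']
  ring

lemma sum_if_pull {β : Type*} [Fintype β] (c : Prop) [Decidable c] (f : β → ℝ) :
    (∑ b : β, if c then f b else 0) = if c then (∑ b : β, f b) else 0 := by
  split <;> simp

lemma entH_comp_inj {Ω : Type*} [MeasurableSpace Ω] (μ : Measure Ω)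
    {α β : Type*} [Fintype α] [Fintype β] (W : Ω → α) (g : α → β)
    (hg : Function.Injective g) :
    entH μ (fun ω => g (W ω)) = entH μ W := by
  classical
  unfold entH
  congr 1
  have hzero : ∀ b ∈ Finset.univ, b ∉ Finset.univ.image g →
      (μ ((fun ω => g (W ω)) ⁻¹' {b})).toReal
        * Real.logb 2 (μ ((fun ω => g (W ω)) ⁻¹' {b})).toReal = 0 := by
    intro b _ hb
    have he : (fun ω => g (W ω)) ⁻¹' {b} = ∅ := by
      ext ω
      simp only [Set.mem_preimage, Set.mem_singleton_iff, Set.mem_empty_iff_false, iff_false]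
      intro h
      exact hb (Finset.mem_image.mpr ⟨W ω, Finset.mem_univ _, h⟩)
    simp [he]
  rw [← Finset.sum_subset (Finset.subset_univ (Finset.univ.image g)) hzero,
    Finset.sum_image (fun x _ y _ h => hg h)]
  refine Finset.sum_congr rfl fun a _ => ?_
  have hpre : (fun ω => g (W ω)) ⁻¹' {g a} = W ⁻¹' {a} := by
    ext ω; simp [hg.eq_iff]
  rw [hpre]

noncomputable def pmfMeasure {Ω' : Type*} [Fintype Ω'] [MeasurableSpace Ω'] (w : Ω' → ℝ) :
    Measure Ω' :=
  ∑ q : Ω', (ENNReal.ofReal (w q)) • Measure.dirac q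

lemma pmfMeasure_apply {Ω' : Type*} [Fintype Ω'] [MeasurableSpace Ω'] (w : Ω' → ℝ)
    (hw : ∀ q, 0 ≤ w q) (A : Set Ω') [DecidablePred (· ∈ A)] (hA : MeasurableSet A) :
    pmfMeasure w A = ENNReal.ofReal (∑ q : Ω', if q ∈ A then w q else 0) := by
  classical
  rw [pmfMeasure, Measure.finset_sum_apply,
    ENNReal.ofReal_sum_of_nonneg (fun q _ => by split <;> [exact hw q; exact le_refl 0])]
  refine Finset.sum_congr rfl fun q _ => ?_
  rw [Measure.smul_apply, Measure.dirac_apply' _ hA]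
  by_cases h : q ∈ A <;> simp [h, Set.indicator]

lemma pmfMeasure_apply_toReal {Ω' : Type*} [Fintype Ω'] [MeasurableSpace Ω'] (w : Ω' → ℝ)
    (hw : ∀ q, 0 ≤ w q) (A : Set Ω') [DecidablePred (· ∈ A)] (hA : MeasurableSet A) :
    ((pmfMeasure w) A).toReal = ∑ q : Ω', if q ∈ A then w q else 0 := by
  rw [pmfMeasure_apply w hw A hA, ENNReal.toReal_ofReal]
  exact Finset.sum_nonneg fun q _ => by split <;> [exact hw q; exact le_refl 0]

lemma measure_ext_singleton {α : Type*} [Fintype α] [MeasurableSpace α]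
    [MeasurableSingletonClass α] {μ₁ μ₂ : Measure α}
    (h : ∀ a, μ₁ {a} = μ₂ {a}) : μ₁ = μ₂ := by
  classical
  ext s hs
  have hrep : s = ⋃ a ∈ Finset.univ.filter (· ∈ s), ({a} : Set α) := by
    ext x; simp
  have hdisj : (↑(Finset.univ.filter (· ∈ s)) : Set α).PairwiseDisjoint
      (fun a => ({a} : Set α)) := fun a _ b _ hab => by simpa using hab
  rw [hrep, measure_biUnion_finset hdisj (fun b _ => measurableSet_singleton b),
      measure_biUnion_finset hdisj (fun b _ => measurableSet_singleton b)]
  exact Finset.sum_congr rfl fun a _ => h a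

lemma pre_lemma {Ω γ : Type*} [MeasurableSpace Ω] [Fintype γ] [MeasurableSpace γ]
    [MeasurableSingletonClass γ] {α : Type*} [Fintype α] [DecidableEq α]
    (μ : Measure Ω) [IsFiniteMeasure μ] (V : Ω → γ) (hV : Measurable V) (g : γ → α)
    (W : Ω → α) (hW : ∀ ω, W ω = g (V ω)) (a : α) :
    (μ (W ⁻¹' {a})).toReal
      = ∑ p : γ, if g p = a then (μ (V ⁻¹' {p})).toReal else 0 := by
  classical
  have hset : W ⁻¹' {a}
      = ⋃ p ∈ Finset.univ.filter (fun p => g p = a), V ⁻¹' {p} := by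
    ext ω
    simp only [Set.mem_preimage, Set.mem_singleton_iff, Set.mem_iUnion, Finset.mem_filter,
      Finset.mem_univ, true_and, hW]
    constructor
    · intro h; exact ⟨V ω, h, rfl⟩
    · rintro ⟨p, hp, hVp⟩; rw [hVp]; exact hp
  have hdisj : (↑(Finset.univ.filter (fun p => g p = a)) : Set γ).PairwiseDisjoint
      (fun p => V ⁻¹' {p}) := by
    intro p _ q _ hpq
    apply Set.disjoint_left.mpr
    intro ω h1 h2
    exact hpq ((Set.mem_singleton_iff.mp h1).symm.trans (Set.mem_singleton_iff.mp h2))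
  rw [hset, measure_biUnion_finset hdisj (fun p _ => hV (measurableSet_singleton p)),
     ENNReal.toReal_sum (fun p _ => measure_ne_top μ _), Finset.sum_filter]

lemma entH_eq_sum {Ω γ : Type*} [MeasurableSpace Ω] [Fintype γ] [MeasurableSpace γ]
    [MeasurableSingletonClass γ] {α : Type*} [Fintype α] [DecidableEq α]
    (μ : Measure Ω) [IsFiniteMeasure μ] (V : Ω → γ) (hV : Measurable V) (g : γ → α)
    (W : Ω → α) (hW : ∀ ω, W ω = g (V ω)) :
    entH μ W = -∑ a : α, fl (∑ p : γ, if g p = a then (μ (V ⁻¹' {p})).toReal else 0) := by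
  unfold entH
  congr 1
  exact Finset.sum_congr rfl fun a _ => by rw [← pre_lemma μ V hV g W hW a]; rfl

lemma entH_pmf {Ω' : Type*} [Fintype Ω'] [MeasurableSpace Ω']
    (hms : ∀ A : Set Ω', MeasurableSet A)
    (w : Ω' → ℝ) (hw : ∀ q, 0 ≤ w q) {α : Type*} [Fintype α] [DecidableEq α] (W : Ω' → α) :
    entH (pmfMeasure w) W
      = -∑ a : α, fl (∑ q : Ω', if W q = a then w q else 0) := by
  classical
  unfold entH
  congr 1
  refine Finset.sum_congr rfl fun a _ => ?_
  rw [pmfMeasure_apply_toReal w hw _ (hms _)]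
  have : ∀ q : Ω', (q ∈ W ⁻¹' {a}) = (W q = a) := fun q => by
    simp [Set.mem_preimage]
  simp only [this]
  rfl

lemma entH_pmf_equiv {Q : Type*} [Fintype Q] {N : ℕ} (E : Fin N ≃ Q)
    [MeasurableSpace (Fin N)] (hms : ∀ A : Set (Fin N), MeasurableSet A)
    (w : Q → ℝ) (hw : ∀ q, 0 ≤ w q) {α : Type*} [Fintype α] [DecidableEq α] (W : Q → α) :
    entH (pmfMeasure (fun i => w (E i))) (fun i => W (E i))
      = -∑ a : α, fl (∑ q : Q, if W q = a then w q else 0) := by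
  rw [entH_pmf hms _ (fun i => hw (E i))]
  congr 1
  refine Finset.sum_congr rfl fun a _ => ?_
  congr 1
  exact Equiv.sum_comp E (fun q => if W q = a then w q else 0)

lemma indep_entropy_sum {A B : Type*} [Fintype A] [Fintype B]
    (u : A → ℝ) (v : B → ℝ) (hu0 : ∀ a, 0 ≤ u a) (hv0 : ∀ b, 0 ≤ v b)
    (hu : ∑ a, u a = 1) (hv : ∑ b, v b = 1) :
    ∑ a, ∑ b, fl (u a * v b) = (∑ a, fl (u a)) + ∑ b, fl (v b) := by
  calc ∑ a, ∑ b, fl (u a * v b)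
      = ∑ a, ∑ b, (v b * fl (u a) + u a * fl (v b)) :=
        Finset.sum_congr rfl fun a _ => Finset.sum_congr rfl fun b _ =>
          fl_mul _ _ (hu0 a) (hv0 b)
    _ = ∑ a, (fl (u a) + u a * ∑ b, fl (v b)) := by
        refine Finset.sum_congr rfl fun a _ => ?_
        rw [Finset.sum_add_distrib, ← Finset.sum_mul, hv, one_mul, ← Finset.mul_sum]
    _ = (∑ a, fl (u a)) + ∑ b, fl (v b) := by
        rw [Finset.sum_add_distrib, ← Finset.sum_mul, hu, one_mul]

lemma condindep_entropy_sum {I X H : Type*} [Fintype I] [Fintype X] [Fintype H]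
    (a : I → X → ℝ) (rr : I → H → ℝ)
    (ha0 : ∀ i x, 0 ≤ a i x) (hr0 : ∀ i h, 0 ≤ rr i h) (hr1 : ∀ i, ∑ h, rr i h = 1) :
    ∑ i, ∑ x, ∑ h, fl (a i x * rr i h)
      = (∑ i, ∑ x, fl (a i x))
        + ((∑ i, ∑ h, fl ((∑ x, a i x) * rr i h)) - ∑ i, fl (∑ x, a i x)) := by
  have key : ∀ i, (∑ x, ∑ h, fl (a i x * rr i h))
      = (∑ x, fl (a i x)) + ((∑ h, fl ((∑ x, a i x) * rr i h)) - fl (∑ x, a i x)) := by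
    intro i
    have hc0 : 0 ≤ ∑ x, a i x := Finset.sum_nonneg fun x _ => ha0 i x
    have step1 : (∑ x, ∑ h, fl (a i x * rr i h))
        = (∑ x, fl (a i x)) + (∑ x, a i x) * ∑ h, fl (rr i h) := by
      calc (∑ x, ∑ h, fl (a i x * rr i h))
          = ∑ x, ∑ h, (rr i h * fl (a i x) + a i x * fl (rr i h)) :=
            Finset.sum_congr rfl fun x _ => Finset.sum_congr rfl fun h _ =>
              fl_mul _ _ (ha0 i x) (hr0 i h)
        _ = ∑ x, (fl (a i x) + a i x * ∑ h, fl (rr i h)) := by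
            refine Finset.sum_congr rfl fun x _ => ?_
            rw [Finset.sum_add_distrib, ← Finset.sum_mul, hr1 i, one_mul, ← Finset.mul_sum]
        _ = (∑ x, fl (a i x)) + (∑ x, a i x) * ∑ h, fl (rr i h) := by
            rw [Finset.sum_add_distrib, ← Finset.sum_mul]
    have step2 : (∑ h, fl ((∑ x, a i x) * rr i h))
        = fl (∑ x, a i x) + (∑ x, a i x) * ∑ h, fl (rr i h) := by
      calc (∑ h, fl ((∑ x, a i x) * rr i h))
          = ∑ h, (rr i h * fl (∑ x, a i x) + (∑ x, a i x) * fl (rr i h)) :=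
            Finset.sum_congr rfl fun h _ => fl_mul _ _ hc0 (hr0 i h)
        _ = fl (∑ x, a i x) + (∑ x, a i x) * ∑ h, fl (rr i h) := by
            rw [Finset.sum_add_distrib, ← Finset.sum_mul, hr1 i, one_mul, ← Finset.mul_sum]
    rw [step1, step2]; ring
  calc ∑ i, ∑ x, ∑ h, fl (a i x * rr i h)
      = ∑ i, ((∑ x, fl (a i x))
          + ((∑ h, fl ((∑ x, a i x) * rr i h)) - fl (∑ x, a i x))) :=
        Finset.sum_congr rfl fun i _ => key i
    _ = _ := by rw [Finset.sum_add_distrib, Finset.sum_sub_distrib]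

lemma sum_ite_eq_real {β : Type*} [Fintype β] [DecidableEq β] (b : β) (f : β → ℝ) :
    (∑ b' : β, if b' = b then f b' else 0) = f b := by
  rw [Finset.sum_ite_eq' Finset.univ b f]
  exact if_pos (Finset.mem_univ b)

lemma split_sum {S X T H : Type*} [Fintype S] [Fintype X] [Fintype T] [Fintype H]
    (F : (S × X × T) × H → ℝ) :
    (∑ q : (S × X × T) × H, F q) = ∑ s : S, ∑ x : X, ∑ t : T, ∑ h : H, F ((s, x, t), h) := by
  rw [Fintype.sum_prod_type]
  calc ∑ p : S × X × T, ∑ h : H, F (p, h)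
      = ∑ s : S, ∑ xt : X × T, ∑ h : H, F ((s, xt), h) := Fintype.sum_prod_type _
    _ = ∑ s : S, ∑ x : X, ∑ t : T, ∑ h : H, F ((s, x, t), h) :=
        Finset.sum_congr rfl fun s _ => Fintype.sum_prod_type _

lemma split_sum3 {S X T : Type*} [Fintype S] [Fintype X] [Fintype T]
    (F : S × X × T → ℝ) :
    (∑ p : S × X × T, F p) = ∑ s : S, ∑ x : X, ∑ t : T, F (s, x, t) := by
  rw [Fintype.sum_prod_type]
  exact Finset.sum_congr rfl fun s _ => Fintype.sum_prod_type _

set_option maxHeartbeats 2000000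
/-- Corollary 2: if `X` is a deterministic function of `(S,T)`
(`H(X|S,T) = 0`), then there is an extension carrying `Y` with `I(Y;S') = 0`,
`I(X';Y|S',T') = 0` and `I(Y;T'|S') = H(T|S)`. -/
theorem corollary2
    {Ω 𝒮 𝒳 𝒯 : Type*} [MeasurableSpace Ω]
    [Fintype 𝒮] [MeasurableSpace 𝒮] [DiscreteMeasurableSpace 𝒮]
    [Fintype 𝒳] [MeasurableSpace 𝒳] [DiscreteMeasurableSpace 𝒳]
    [Fintype 𝒯] [MeasurableSpace 𝒯] [DiscreteMeasurableSpace 𝒯]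
    (μ : Measure Ω) [IsProbabilityMeasure μ]
    (S : Ω → 𝒮) (X : Ω → 𝒳) (T : Ω → 𝒯)
    (hS : Measurable S) (hX : Measurable X) (hT : Measurable T)
    (hdet : condEntH μ X (fun ω => (S ω, T ω)) = 0) :
    ∃ (Ω' : Type) (_ : MeasurableSpace Ω') (μ' : Measure Ω') (n : ℕ)
      (S' : Ω' → 𝒮) (X' : Ω' → 𝒳) (T' : Ω' → 𝒯) (Y : Ω' → Fin n),
      IsProbabilityMeasure μ' ∧
      Measurable S' ∧ Measurable X' ∧ Measurable T' ∧ Measurable Y ∧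
      μ'.map (fun ω => (S' ω, X' ω, T' ω)) = μ.map (fun ω => (S ω, X ω, T ω)) ∧
      mutInf μ' Y S' = 0 ∧
      condMutInf μ' X' Y (fun ω => (S' ω, T' ω)) = 0 ∧
      condMutInf μ' Y T' S' = condEntH μ T S := by
  classical
  -- Ω is nonempty
  have hΩne : Nonempty Ω := by
    by_contra hne
    rw [not_nonempty_iff] at hne
    have h1 : μ Set.univ = 1 := measure_univ
    rw [Set.univ_eq_empty_iff.mpr hne, measure_empty] at h1
    exact zero_ne_one h1
  obtain ⟨ω₀⟩ := hΩne
  -- the joint distribution of (S, X, T) as a pmf P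
  set V : Ω → 𝒮 × 𝒳 × 𝒯 := fun ω => (S ω, X ω, T ω) with hVdef
  have hVm : Measurable V := hS.prodMk (hX.prodMk hT)
  set P : 𝒮 × 𝒳 × 𝒯 → ℝ := fun p => (μ (V ⁻¹' {p})).toReal with hPdef
  have hP_apply : ∀ p, (μ (V ⁻¹' {p})).toReal = P p := fun p => rfl
  have hP0 : ∀ p, 0 ≤ P p := fun p => ENNReal.toReal_nonneg
  have hPsum : ∑ p : 𝒮 × 𝒳 × 𝒯, P p = 1 := by
    have h := pre_lemma μ V hVm (fun _ => (0 : Fin 1)) (fun _ : Ω => (0 : Fin 1))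
      (fun ω => rfl) 0
    simp only [hP_apply] at h
    have hpre : ((fun _ : Ω => (0 : Fin 1)) ⁻¹' {0}) = Set.univ := by
      ext ω; simp
    rw [hpre, measure_univ] at h
    simpa using h.symm
  set pST : 𝒮 → 𝒯 → ℝ := fun s t => ∑ x : 𝒳, P (s, x, t) with hpSTdef
  set pS : 𝒮 → ℝ := fun s => ∑ t : 𝒯, pST s t with hpSdef
  have hpST_apply : ∀ s t, pST s t = ∑ x : 𝒳, P (s, x, t) := fun _ _ => rfl
  have hpS_apply : ∀ s, pS s = ∑ t : 𝒯, pST s t := fun _ => rfl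
  have hpST0 : ∀ s t, 0 ≤ pST s t := fun s t => Finset.sum_nonneg fun x _ => hP0 _
  have hpS0 : ∀ s, 0 ≤ pS s := fun s => Finset.sum_nonneg fun t _ => hpST0 _ _
  have hpSTle : ∀ s t, pST s t ≤ pS s := fun s t =>
    Finset.single_le_sum (fun t' _ => hpST0 s t') (Finset.mem_univ t)
  have hPsplit : ∀ s, (∑ x : 𝒳, ∑ t : 𝒯, P (s, x, t)) = pS s := by
    intro s
    rw [hpS_apply]
    rw [Finset.sum_comm]
  have hpSsum : ∑ s : 𝒮, pS s = 1 := by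
    rw [← hPsum, split_sum3 P]
    exact Finset.sum_congr rfl fun s _ => (hPsplit s).symm
  -- the conditional distribution ν of T given S
  set ν : 𝒮 → 𝒯 → ℝ :=
    fun s t => if pS s = 0 then (if t = T ω₀ then 1 else 0) else pST s t / pS s with hνdef
  have hν0 : ∀ s t, 0 ≤ ν s t := by
    intro s t
    rw [hνdef]
    dsimp only
    split
    · split <;> norm_num
    · exact div_nonneg (hpST0 s t) (hpS0 s)
  have hνsum : ∀ s, ∑ t : 𝒯, ν s t = 1 := by
    intro s
    by_cases h : pS s = 0
    · simp [hνdef, h]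
    · simp only [hνdef, if_neg h]
      rw [← Finset.sum_div, ← hpS_apply, div_self h]
  have hνmul : ∀ s t, pS s * ν s t = pST s t := by
    intro s t
    by_cases h : pS s = 0
    · rw [h, zero_mul]
      have h2 : pST s t ≤ 0 := h ▸ hpSTle s t
      exact (le_antisymm h2 (hpST0 s t)).symm
    · simp only [hνdef, if_neg h]
      field_simp
  -- the kernels R, r and the marginal pmf Q of Y
  set R : 𝒮 → (𝒮 → 𝒯) → ℝ := fun s h => ∏ s' ∈ Finset.univ.erase s, ν s' (h s') with hRdef
  set r : 𝒮 → 𝒯 → (𝒮 → 𝒯) → ℝ := fun s t h => (if h s = t then 1 else 0) * R s h with hrdef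
  set Q : (𝒮 → 𝒯) → ℝ := fun h => ∏ s' : 𝒮, ν s' (h s') with hQdef
  have hR0 : ∀ s h, 0 ≤ R s h := fun s h => Finset.prod_nonneg fun s' _ => hν0 _ _
  have hr0 : ∀ s t h, 0 ≤ r s t h := by
    intro s t h
    rw [hrdef]
    dsimp only
    apply mul_nonneg _ (hR0 s h)
    split <;> norm_num
  have hQ0 : ∀ h, 0 ≤ Q h := fun h => Finset.prod_nonneg fun s' _ => hν0 _ _
  have hQR : ∀ s h, Q h = ν s (h s) * R s h := by
    intro s h
    rw [hQdef, hRdef]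
    exact (Finset.mul_prod_erase Finset.univ (fun s' => ν s' (h s'))
      (Finset.mem_univ s)).symm
  have hr_prod : ∀ s t h, r s t h
      = ∏ s' : 𝒮, (if s' = s then (if h s' = t then 1 else 0) else ν s' (h s')) := by
    intro s t h
    rw [← Finset.mul_prod_erase Finset.univ _ (Finset.mem_univ s), if_pos rfl, hrdef]
    dsimp only
    congr 1
    refine Finset.prod_congr rfl fun s' hs' => ?_
    rw [if_neg (Finset.ne_of_mem_erase hs')]
  have hrsum : ∀ s t, ∑ h : 𝒮 → 𝒯, r s t h = 1 := by
    intro s t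
    calc ∑ h : 𝒮 → 𝒯, r s t h
        = ∑ h : 𝒮 → 𝒯, ∏ s' : 𝒮,
            (if s' = s then (if h s' = t then 1 else 0) else ν s' (h s')) :=
          Finset.sum_congr rfl fun h _ => hr_prod s t h
      _ = ∏ s' : 𝒮, ∑ u : 𝒯, (if s' = s then (if u = t then 1 else 0) else ν s' u) :=
          (Fintype.prod_sum
            (fun s' u => if s' = s then (if u = t then 1 else 0) else ν s' u)).symm
      _ = 1 := by
          apply Finset.prod_eq_one
          intro s' _
          by_cases h : s' = s
          · simp [h]
          · simp [h, hνsum s']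
  have hQsum : ∑ h : 𝒮 → 𝒯, Q h = 1 := by
    calc ∑ h : 𝒮 → 𝒯, Q h = ∑ h : 𝒮 → 𝒯, ∏ s' : 𝒮, ν s' (h s') :=
          Finset.sum_congr rfl fun h _ => by rw [hQdef]
      _ = ∏ s' : 𝒮, ∑ u : 𝒯, ν s' u := (Fintype.prod_sum (fun s' u => ν s' u)).symm
      _ = 1 := Finset.prod_eq_one fun s' _ => hνsum s'
  have hqform : ∀ s h, ∑ t : 𝒯, pST s t * r s t h = pS s * Q h := by
    intro s h
    calc ∑ t : 𝒯, pST s t * r s t h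
        = ∑ t : 𝒯, (if h s = t then pST s t * R s h else 0) := by
          refine Finset.sum_congr rfl fun t _ => ?_
          rw [hrdef]
          dsimp only
          by_cases hc : h s = t
          · rw [if_pos hc, if_pos hc, one_mul]
          · rw [if_neg hc, if_neg hc, zero_mul, mul_zero]
      _ = pST s (h s) * R s h := by
          rw [Finset.sum_ite_eq Finset.univ (h s) (fun t => pST s t * R s h)]
          exact if_pos (Finset.mem_univ _)
      _ = pS s * Q h := by rw [← hνmul s (h s), hQR s h]; ring
  -- the joint pmf w on (𝒮 × 𝒳 × 𝒯) × (𝒮 → 𝒯)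
  set w : (𝒮 × 𝒳 × 𝒯) × (𝒮 → 𝒯) → ℝ := fun q => P q.1 * r q.1.1 q.1.2.2 q.2 with hwdef
  have hw_eval : ∀ s x t h, w ((s, x, t), h) = P (s, x, t) * r s t h := fun _ _ _ _ => rfl
  have hw0 : ∀ q, 0 ≤ w q := fun q => mul_nonneg (hP0 _) (hr0 _ _ _)
  have hw_sum_h : ∀ s x t, (∑ h : 𝒮 → 𝒯, w ((s, x, t), h)) = P (s, x, t) := by
    intro s x t
    simp only [hw_eval]
    rw [← Finset.mul_sum, hrsum, mul_one]
  have hw_sum_x : ∀ s t h, (∑ x : 𝒳, w ((s, x, t), h)) = pST s t * r s t h := by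
    intro s t h
    simp only [hw_eval]
    rw [← Finset.sum_mul, ← hpST_apply]
  have hw_sum_xt : ∀ s h, (∑ x : 𝒳, ∑ t : 𝒯, w ((s, x, t), h)) = pS s * Q h := by
    intro s h
    rw [Finset.sum_comm]
    calc ∑ t : 𝒯, ∑ x : 𝒳, w ((s, x, t), h) = ∑ t : 𝒯, pST s t * r s t h :=
          Finset.sum_congr rfl fun t _ => hw_sum_x s t h
      _ = pS s * Q h := hqform s h
  have hw_sum_sxt : ∀ h, (∑ s : 𝒮, ∑ x : 𝒳, ∑ t : 𝒯, w ((s, x, t), h)) = Q h := by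
    intro h
    calc ∑ s : 𝒮, ∑ x : 𝒳, ∑ t : 𝒯, w ((s, x, t), h) = ∑ s : 𝒮, pS s * Q h :=
          Finset.sum_congr rfl fun s _ => hw_sum_xt s h
      _ = (∑ s : 𝒮, pS s) * Q h := (Finset.sum_mul _ _ _).symm
      _ = Q h := by rw [hpSsum, one_mul]
  have hwsum : ∑ q : (𝒮 × 𝒳 × 𝒯) × (𝒮 → 𝒯), w q = 1 := by
    rw [split_sum w]
    calc ∑ s : 𝒮, ∑ x : 𝒳, ∑ t : 𝒯, ∑ h : 𝒮 → 𝒯, w ((s, x, t), h)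
        = ∑ s : 𝒮, ∑ x : 𝒳, ∑ t : 𝒯, P (s, x, t) :=
          Finset.sum_congr rfl fun s _ => Finset.sum_congr rfl fun x _ =>
            Finset.sum_congr rfl fun t _ => hw_sum_h s x t
      _ = ∑ s : 𝒮, pS s := Finset.sum_congr rfl fun s _ => hPsplit s
      _ = 1 := hpSsum
  -- the underlying finite space
  set N := Fintype.card ((𝒮 × 𝒳 × 𝒯) × (𝒮 → 𝒯)) with hNdef
  set E : Fin N ≃ (𝒮 × 𝒳 × 𝒯) × (𝒮 → 𝒯) := (Fintype.equivFin _).symm with hEdef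
  set n := Fintype.card (𝒮 → 𝒯) with hndef
  set e : (𝒮 → 𝒯) ≃ Fin n := Fintype.equivFin _ with hedef
  have hms : ∀ A : Set (Fin N), MeasurableSet A := fun A => MeasurableSet.of_discrete
  set μ' : Measure (Fin N) := pmfMeasure (fun i => w (E i)) with hμ'def
  have hw0' : ∀ i : Fin N, 0 ≤ w (E i) := fun i => hw0 (E i)
  have hprob : IsProbabilityMeasure μ' := by
    constructor
    rw [hμ'def, pmfMeasure_apply _ hw0' _ (hms _)]
    simp only [Set.mem_univ, if_true]
    rw [Equiv.sum_comp E w, hwsum]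
    exact ENNReal.ofReal_one

  -- marginal computations for the pmf w
  have core_p : ∀ p : 𝒮 × 𝒳 × 𝒯,
      (∑ q : (𝒮 × 𝒳 × 𝒯) × (𝒮 → 𝒯), if q.1 = p then w q else 0) = P p := by
    rintro ⟨s, x, t⟩
    rw [split_sum (fun q => if q.1 = (s, x, t) then w q else 0)]
    dsimp only
    simp only [Prod.mk.injEq, ite_and, sum_if_pull, Finset.sum_ite_eq', Finset.mem_univ,
      if_true]
    exact hw_sum_h s x t
  have core_s : ∀ s : 𝒮,
      (∑ q : (𝒮 × 𝒳 × 𝒯) × (𝒮 → 𝒯), if q.1.1 = s then w q else 0) = pS s := by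
    intro s
    rw [split_sum (fun q => if q.1.1 = s then w q else 0)]
    dsimp only
    rw [Finset.sum_eq_single s (fun b _ hb => by simp [hb]) (by simp)]
    simp only [if_true]
    calc ∑ x : 𝒳, ∑ t : 𝒯, ∑ h : 𝒮 → 𝒯, w ((s, x, t), h)
        = ∑ x : 𝒳, ∑ t : 𝒯, P (s, x, t) :=
          Finset.sum_congr rfl fun x _ => Finset.sum_congr rfl fun t _ => hw_sum_h s x t
      _ = pS s := hPsplit s
  have core_st : ∀ s t,
      (∑ q : (𝒮 × 𝒳 × 𝒯) × (𝒮 → 𝒯), if (q.1.1, q.1.2.2) = (s, t) then w q else 0)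
        = pST s t := by
    intro s t
    rw [split_sum (fun q => if (q.1.1, q.1.2.2) = (s, t) then w q else 0)]
    dsimp only
    simp only [Prod.mk.injEq, ite_and, sum_if_pull, Finset.sum_ite_eq', Finset.mem_univ,
      if_true]
    calc ∑ x : 𝒳, ∑ h : 𝒮 → 𝒯, w ((s, x, t), h)
        = ∑ x : 𝒳, P (s, x, t) := Finset.sum_congr rfl fun x _ => hw_sum_h s x t
      _ = pST s t := (hpST_apply s t).symm
  have core_ts : ∀ a : 𝒯 × 𝒮,
      (∑ q : (𝒮 × 𝒳 × 𝒯) × (𝒮 → 𝒯), if (q.1.2.2, q.1.1) = a then w q else 0)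
        = pST a.2 a.1 := by
    rintro ⟨t, s⟩
    rw [split_sum (fun q => if (q.1.2.2, q.1.1) = (t, s) then w q else 0)]
    dsimp only
    simp only [Prod.mk.injEq, ite_and, sum_if_pull, Finset.sum_ite_eq', Finset.mem_univ,
      if_true]
    calc ∑ x : 𝒳, ∑ h : 𝒮 → 𝒯, w ((s, x, t), h)
        = ∑ x : 𝒳, P (s, x, t) := Finset.sum_congr rfl fun x _ => hw_sum_h s x t
      _ = pST s t := (hpST_apply s t).symm
  have core_h : ∀ h : 𝒮 → 𝒯,
      (∑ q : (𝒮 × 𝒳 × 𝒯) × (𝒮 → 𝒯), if q.2 = h then w q else 0) = Q h := by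
    intro h
    rw [split_sum (fun q => if q.2 = h then w q else 0)]
    dsimp only
    simp only [Finset.sum_ite_eq', Finset.mem_univ, if_true]
    exact hw_sum_sxt h
  have core_hs : ∀ (h : 𝒮 → 𝒯) (s : 𝒮),
      (∑ q : (𝒮 × 𝒳 × 𝒯) × (𝒮 → 𝒯), if (q.2, q.1.1) = (h, s) then w q else 0)
        = pS s * Q h := by
    intro h s
    rw [split_sum (fun q => if (q.2, q.1.1) = (h, s) then w q else 0)]
    dsimp only
    simp only [Prod.mk.injEq, ite_and, sum_if_pull, Finset.sum_ite_eq', Finset.mem_univ,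
      if_true]
    exact hw_sum_xt s h
  have core_hst : ∀ (h : 𝒮 → 𝒯) (s : 𝒮) (t : 𝒯),
      (∑ q : (𝒮 × 𝒳 × 𝒯) × (𝒮 → 𝒯),
        if (q.2, (q.1.1, q.1.2.2)) = (h, (s, t)) then w q else 0)
        = pST s t * r s t h := by
    intro h s t
    rw [split_sum (fun q => if (q.2, (q.1.1, q.1.2.2)) = (h, (s, t)) then w q else 0)]
    dsimp only
    simp only [Prod.mk.injEq, ite_and, sum_if_pull, Finset.sum_ite_eq', Finset.mem_univ,
      if_true]
    exact hw_sum_x s t h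
  have core_hts : ∀ a : ((𝒮 → 𝒯) × 𝒯) × 𝒮,
      (∑ q : (𝒮 × 𝒳 × 𝒯) × (𝒮 → 𝒯),
        if ((q.2, q.1.2.2), q.1.1) = a then w q else 0)
        = pST a.2 a.1.2 * r a.2 a.1.2 a.1.1 := by
    rintro ⟨⟨h, t⟩, s⟩
    rw [split_sum (fun q => if ((q.2, q.1.2.2), q.1.1) = ((h, t), s) then w q else 0)]
    dsimp only
    simp only [Prod.mk.injEq, ite_and, sum_if_pull, Finset.sum_ite_eq', Finset.mem_univ,
      if_true]
    exact hw_sum_x s t h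
  have core_xst : ∀ (x : 𝒳) (s : 𝒮) (t : 𝒯),
      (∑ q : (𝒮 × 𝒳 × 𝒯) × (𝒮 → 𝒯),
        if (q.1.2.1, (q.1.1, q.1.2.2)) = (x, (s, t)) then w q else 0)
        = P (s, x, t) := by
    intro x s t
    rw [split_sum (fun q => if (q.1.2.1, (q.1.1, q.1.2.2)) = (x, (s, t)) then w q else 0)]
    dsimp only
    simp only [Prod.mk.injEq, ite_and, sum_if_pull, Finset.sum_ite_eq', Finset.mem_univ,
      if_true]
    exact hw_sum_h s x t
  have core_xhst : ∀ (x : 𝒳) (h : 𝒮 → 𝒯) (s : 𝒮) (t : 𝒯),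
      (∑ q : (𝒮 × 𝒳 × 𝒯) × (𝒮 → 𝒯),
        if ((q.1.2.1, q.2), (q.1.1, q.1.2.2)) = ((x, h), (s, t)) then w q else 0)
        = P (s, x, t) * r s t h := by
    intro x h s t
    rw [split_sum
      (fun q => if ((q.1.2.1, q.2), (q.1.1, q.1.2.2)) = ((x, h), (s, t)) then w q else 0)]
    dsimp only
    simp only [Prod.mk.injEq, ite_and, sum_if_pull, Finset.sum_ite_eq', Finset.mem_univ,
      if_true]
    exact hw_eval s x t h
  -- marginals of P
  have hmargP_s : ∀ s : 𝒮,
      (∑ p : 𝒮 × 𝒳 × 𝒯, if p.1 = s then P p else 0) = pS s := by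
    intro s
    rw [split_sum3 (fun p => if p.1 = s then P p else 0)]
    dsimp only
    rw [Finset.sum_eq_single s (fun b _ hb => by simp [hb]) (by simp)]
    simp only [if_true]
    exact hPsplit s
  have hmargP_ts : ∀ a : 𝒯 × 𝒮,
      (∑ p : 𝒮 × 𝒳 × 𝒯, if (p.2.2, p.1) = a then P p else 0) = pST a.2 a.1 := by
    rintro ⟨t, s⟩
    rw [split_sum3 (fun p => if (p.2.2, p.1) = (t, s) then P p else 0)]
    dsimp only
    simp only [Prod.mk.injEq, ite_and, sum_if_pull, Finset.sum_ite_eq', Finset.mem_univ,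
      if_true]
    exact (hpST_apply s t).symm
  -- injectivity of the relabeling maps
  have hg1 : Function.Injective (fun z : (𝒮 → 𝒯) × 𝒮 => (e z.1, z.2)) := by
    rintro ⟨a, b⟩ ⟨c, d⟩ hz
    simp only [Prod.mk.injEq] at hz
    rw [e.injective hz.1, hz.2]
  have hg1' : Function.Injective (fun z : (𝒮 → 𝒯) × (𝒮 × 𝒯) => (e z.1, z.2)) := by
    rintro ⟨a, b⟩ ⟨c, d⟩ hz
    simp only [Prod.mk.injEq] at hz
    rw [e.injective hz.1, hz.2]
  have hg2 : Function.Injective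
      (fun z : (𝒳 × (𝒮 → 𝒯)) × (𝒮 × 𝒯) => ((z.1.1, e z.1.2), z.2)) := by
    rintro ⟨⟨a, b⟩, c⟩ ⟨⟨a', b'⟩, c'⟩ hz
    simp only [Prod.mk.injEq] at hz
    rw [hz.1.1, e.injective hz.1.2, hz.2]
  have hg3 : Function.Injective
      (fun z : ((𝒮 → 𝒯) × 𝒯) × 𝒮 => ((e z.1.1, z.1.2), z.2)) := by
    rintro ⟨⟨a, b⟩, c⟩ ⟨⟨a', b'⟩, c'⟩ hz
    simp only [Prod.mk.injEq] at hz
    rw [e.injective hz.1.1, hz.1.2, hz.2]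
  -- entropies of the constructed variables
  have E_S : entH μ' (fun i => (E i).1.1) = -∑ s : 𝒮, fl (pS s) := by
    have h0 : entH μ' (fun i => (E i).1.1)
        = -∑ s : 𝒮, fl (∑ q : (𝒮 × 𝒳 × 𝒯) × (𝒮 → 𝒯), if q.1.1 = s then w q else 0) :=
      entH_pmf_equiv E hms w hw0 (fun q => q.1.1)
    rw [h0]
    congr 1
    exact Finset.sum_congr rfl fun s _ => by rw [core_s s]
  have E_Y : entH μ' (fun i => (E i).2) = -∑ h : 𝒮 → 𝒯, fl (Q h) := by
    have h0 : entH μ' (fun i => (E i).2)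
        = -∑ h : 𝒮 → 𝒯, fl (∑ q : (𝒮 × 𝒳 × 𝒯) × (𝒮 → 𝒯), if q.2 = h then w q else 0) :=
      entH_pmf_equiv E hms w hw0 (fun q => q.2)
    rw [h0]
    congr 1
    exact Finset.sum_congr rfl fun h _ => by rw [core_h h]
  have E_YS : entH μ' (fun i => ((E i).2, (E i).1.1))
      = -∑ h : 𝒮 → 𝒯, ∑ s : 𝒮, fl (Q h * pS s) := by
    have h0 : entH μ' (fun i => ((E i).2, (E i).1.1))
        = -∑ a : (𝒮 → 𝒯) × 𝒮,
            fl (∑ q : (𝒮 × 𝒳 × 𝒯) × (𝒮 → 𝒯), if (q.2, q.1.1) = a then w q else 0) :=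
      entH_pmf_equiv E hms w hw0 (fun q => (q.2, q.1.1))
    rw [h0]
    congr 1
    rw [Fintype.sum_prod_type]
    refine Finset.sum_congr rfl fun h _ => Finset.sum_congr rfl fun s _ => ?_
    rw [core_hs h s, mul_comm]
  have E_TS : entH μ' (fun i => ((E i).1.2.2, (E i).1.1))
      = -∑ a : 𝒯 × 𝒮, fl (pST a.2 a.1) := by
    have h0 : entH μ' (fun i => ((E i).1.2.2, (E i).1.1))
        = -∑ a : 𝒯 × 𝒮,
            fl (∑ q : (𝒮 × 𝒳 × 𝒯) × (𝒮 → 𝒯), if (q.1.2.2, q.1.1) = a then w q else 0) :=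
      entH_pmf_equiv E hms w hw0 (fun q => (q.1.2.2, q.1.1))
    rw [h0]
    congr 1
    exact Finset.sum_congr rfl fun a _ => by rw [core_ts a]
  have E_Z : entH μ' (fun i => ((E i).1.1, (E i).1.2.2))
      = -∑ i : 𝒮 × 𝒯, fl (pST i.1 i.2) := by
    have h0 : entH μ' (fun i => ((E i).1.1, (E i).1.2.2))
        = -∑ a : 𝒮 × 𝒯,
            fl (∑ q : (𝒮 × 𝒳 × 𝒯) × (𝒮 → 𝒯), if (q.1.1, q.1.2.2) = a then w q else 0) :=
      entH_pmf_equiv E hms w hw0 (fun q => (q.1.1, q.1.2.2))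
    rw [h0]
    congr 1
    refine Finset.sum_congr rfl fun a _ => ?_
    obtain ⟨s, t⟩ := a
    rw [core_st s t]
  have E_XZ : entH μ' (fun i => ((E i).1.2.1, ((E i).1.1, (E i).1.2.2)))
      = -∑ i : 𝒮 × 𝒯, ∑ x : 𝒳, fl (P (i.1, x, i.2)) := by
    have h0 : entH μ' (fun i => ((E i).1.2.1, ((E i).1.1, (E i).1.2.2)))
        = -∑ a : 𝒳 × (𝒮 × 𝒯),
            fl (∑ q : (𝒮 × 𝒳 × 𝒯) × (𝒮 → 𝒯),
              if (q.1.2.1, (q.1.1, q.1.2.2)) = a then w q else 0) :=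
      entH_pmf_equiv E hms w hw0 (fun q => (q.1.2.1, (q.1.1, q.1.2.2)))
    rw [h0]
    congr 1
    rw [Fintype.sum_prod_type, Finset.sum_comm]
    refine Finset.sum_congr rfl fun i _ => Finset.sum_congr rfl fun x _ => ?_
    obtain ⟨s, t⟩ := i
    rw [core_xst x s t]
  have E_YZ : entH μ' (fun i => ((E i).2, ((E i).1.1, (E i).1.2.2)))
      = -∑ i : 𝒮 × 𝒯, ∑ h : 𝒮 → 𝒯, fl (pST i.1 i.2 * r i.1 i.2 h) := by
    have h0 : entH μ' (fun i => ((E i).2, ((E i).1.1, (E i).1.2.2)))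
        = -∑ a : (𝒮 → 𝒯) × (𝒮 × 𝒯),
            fl (∑ q : (𝒮 × 𝒳 × 𝒯) × (𝒮 → 𝒯),
              if (q.2, (q.1.1, q.1.2.2)) = a then w q else 0) :=
      entH_pmf_equiv E hms w hw0 (fun q => (q.2, (q.1.1, q.1.2.2)))
    rw [h0]
    congr 1
    rw [Fintype.sum_prod_type, Finset.sum_comm]
    refine Finset.sum_congr rfl fun i _ => Finset.sum_congr rfl fun h _ => ?_
    obtain ⟨s, t⟩ := i
    rw [core_hst h s t]
  have E_XYZ : entH μ' (fun i => (((E i).1.2.1, e ((E i).2)), ((E i).1.1, (E i).1.2.2)))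
      = -∑ i : 𝒮 × 𝒯, ∑ x : 𝒳, ∑ h : 𝒮 → 𝒯, fl (P (i.1, x, i.2) * r i.1 i.2 h) := by
    have hstrip : entH μ' (fun i => (((E i).1.2.1, e ((E i).2)), ((E i).1.1, (E i).1.2.2)))
        = entH μ' (fun i => (((E i).1.2.1, (E i).2), ((E i).1.1, (E i).1.2.2))) :=
      entH_comp_inj μ' (fun i => (((E i).1.2.1, (E i).2), ((E i).1.1, (E i).1.2.2)))
        (fun z => ((z.1.1, e z.1.2), z.2)) hg2
    rw [hstrip]
    have h0 : entH μ' (fun i => (((E i).1.2.1, (E i).2), ((E i).1.1, (E i).1.2.2)))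
        = -∑ a : (𝒳 × (𝒮 → 𝒯)) × (𝒮 × 𝒯),
            fl (∑ q : (𝒮 × 𝒳 × 𝒯) × (𝒮 → 𝒯),
              if ((q.1.2.1, q.2), (q.1.1, q.1.2.2)) = a then w q else 0) :=
      entH_pmf_equiv E hms w hw0 (fun q => ((q.1.2.1, q.2), (q.1.1, q.1.2.2)))
    rw [h0]
    congr 1
    rw [Fintype.sum_prod_type, Finset.sum_comm]
    refine Finset.sum_congr rfl fun i _ => ?_
    rw [Fintype.sum_prod_type]
    refine Finset.sum_congr rfl fun x _ => Finset.sum_congr rfl fun h _ => ?_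
    obtain ⟨s, t⟩ := i
    rw [core_xhst x h s t]
  have h4 : ∀ (h : 𝒮 → 𝒯) (s : 𝒮),
      (∑ t : 𝒯, fl (pST s t * r s t h)) = fl (Q h * pS s) := by
    intro h s
    calc ∑ t : 𝒯, fl (pST s t * r s t h)
        = ∑ t : 𝒯, (if h s = t then fl (pST s t * R s h) else 0) := by
          refine Finset.sum_congr rfl fun t _ => ?_
          by_cases hc : h s = t
          · rw [if_pos hc]
            congr 1
            rw [hrdef]
            dsimp only
            rw [if_pos hc, one_mul]
          · rw [if_neg hc]
            have hr0' : r s t h = 0 := by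
              rw [hrdef]; dsimp only; rw [if_neg hc, zero_mul]
            rw [hr0', mul_zero, fl_zero]
      _ = fl (pST s (h s) * R s h) := by
          rw [Finset.sum_ite_eq Finset.univ (h s) (fun t => fl (pST s t * R s h))]
          exact if_pos (Finset.mem_univ _)
      _ = fl (Q h * pS s) := by
          rw [← hνmul s (h s), hQR s h]
          congr 1
          ring
  have E_YTS : entH μ' (fun i => ((e ((E i).2), (E i).1.2.2), (E i).1.1))
      = -∑ h : 𝒮 → 𝒯, ∑ s : 𝒮, fl (Q h * pS s) := by
    have hstrip : entH μ' (fun i => ((e ((E i).2), (E i).1.2.2), (E i).1.1))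
        = entH μ' (fun i => (((E i).2, (E i).1.2.2), (E i).1.1)) :=
      entH_comp_inj μ' (fun i => (((E i).2, (E i).1.2.2), (E i).1.1))
        (fun z => ((e z.1.1, z.1.2), z.2)) hg3
    rw [hstrip]
    have h0 : entH μ' (fun i => (((E i).2, (E i).1.2.2), (E i).1.1))
        = -∑ a : ((𝒮 → 𝒯) × 𝒯) × 𝒮,
            fl (∑ q : (𝒮 × 𝒳 × 𝒯) × (𝒮 → 𝒯),
              if ((q.2, q.1.2.2), q.1.1) = a then w q else 0) :=
      entH_pmf_equiv E hms w hw0 (fun q => ((q.2, q.1.2.2), q.1.1))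
    rw [h0]
    congr 1
    calc ∑ a : ((𝒮 → 𝒯) × 𝒯) × 𝒮,
          fl (∑ q : (𝒮 × 𝒳 × 𝒯) × (𝒮 → 𝒯),
            if ((q.2, q.1.2.2), q.1.1) = a then w q else 0)
        = ∑ a : ((𝒮 → 𝒯) × 𝒯) × 𝒮, fl (pST a.2 a.1.2 * r a.2 a.1.2 a.1.1) :=
          Finset.sum_congr rfl fun a _ => by rw [core_hts a]
      _ = ∑ ht : (𝒮 → 𝒯) × 𝒯, ∑ s : 𝒮, fl (pST s ht.2 * r s ht.2 ht.1) :=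
          Fintype.sum_prod_type _
      _ = ∑ h : 𝒮 → 𝒯, ∑ t : 𝒯, ∑ s : 𝒮, fl (pST s t * r s t h) :=
          Fintype.sum_prod_type _
      _ = ∑ h : 𝒮 → 𝒯, ∑ s : 𝒮, ∑ t : 𝒯, fl (pST s t * r s t h) :=
          Finset.sum_congr rfl fun h _ => Finset.sum_comm
      _ = ∑ h : 𝒮 → 𝒯, ∑ s : 𝒮, fl (Q h * pS s) :=
          Finset.sum_congr rfl fun h _ => Finset.sum_congr rfl fun s _ => h4 h s
  -- entropies on the original space
  have hμS : entH μ S = -∑ s : 𝒮, fl (pS s) := by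
    have h0 : entH μ S
        = -∑ s : 𝒮, fl (∑ p : 𝒮 × 𝒳 × 𝒯, if p.1 = s then (μ (V ⁻¹' {p})).toReal else 0) :=
      entH_eq_sum μ V hVm (fun p => p.1) S (fun ω => rfl)
    rw [h0]
    congr 1
    refine Finset.sum_congr rfl fun s _ => ?_
    simp only [hP_apply]
    rw [hmargP_s s]
  have hμTS : entH μ (fun ω => (T ω, S ω)) = -∑ a : 𝒯 × 𝒮, fl (pST a.2 a.1) := by
    have h0 : entH μ (fun ω => (T ω, S ω))
        = -∑ a : 𝒯 × 𝒮,
            fl (∑ p : 𝒮 × 𝒳 × 𝒯, if (p.2.2, p.1) = a then (μ (V ⁻¹' {p})).toReal else 0) :=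
      entH_eq_sum μ V hVm (fun p => (p.2.2, p.1)) (fun ω => (T ω, S ω)) (fun ω => rfl)
    rw [h0]
    congr 1
    refine Finset.sum_congr rfl fun a _ => ?_
    simp only [hP_apply]
    rw [hmargP_ts a]
  -- strip the encoding `e` from entropies involving Y
  have hYe : entH μ' (fun i => e ((E i).2)) = entH μ' (fun i => (E i).2) :=
    entH_comp_inj μ' (fun i => (E i).2) e e.injective
  have hYSe : entH μ' (fun i => (e ((E i).2), (E i).1.1))
      = entH μ' (fun i => ((E i).2, (E i).1.1)) :=
    entH_comp_inj μ' (fun i => ((E i).2, (E i).1.1)) (fun z => (e z.1, z.2)) hg1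
  have hYZe : entH μ' (fun i => (e ((E i).2), ((E i).1.1, (E i).1.2.2)))
      = entH μ' (fun i => ((E i).2, ((E i).1.1, (E i).1.2.2))) :=
    entH_comp_inj μ' (fun i => ((E i).2, ((E i).1.1, (E i).1.2.2)))
      (fun z => (e z.1, z.2)) hg1'
  -- assemble the result
  refine ⟨Fin N, inferInstance, μ', n,
    fun i => (E i).1.1, fun i => (E i).1.2.1, fun i => (E i).1.2.2, fun i => e ((E i).2),
    hprob, fun _ _ => hms _, fun _ _ => hms _, fun _ _ => hms _, fun _ _ => hms _,
    ?_, ?_, ?_, ?_⟩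
  · -- equality of joint distributions
    have hmeas1 : Measurable (fun i : Fin N => ((E i).1.1, (E i).1.2.1, (E i).1.2.2)) :=
      fun _ _ => hms _
    apply measure_ext_singleton
    intro p
    rw [Measure.map_apply hmeas1 (measurableSet_singleton p),
        Measure.map_apply hVm (measurableSet_singleton p),
        hμ'def, pmfMeasure_apply _ hw0' _ (hms _)]
    have h2 : (∑ i : Fin N,
        if i ∈ ((fun i : Fin N => ((E i).1.1, (E i).1.2.1, (E i).1.2.2)) ⁻¹' {p})
          then w (E i) else 0) = P p := by
      calc (∑ i : Fin N,
          if i ∈ ((fun i : Fin N => ((E i).1.1, (E i).1.2.1, (E i).1.2.2)) ⁻¹' {p})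
            then w (E i) else 0)
          = ∑ i : Fin N, if (E i).1 = p then w (E i) else 0 := by
            refine Finset.sum_congr rfl fun i _ => ?_
            congr 1
        _ = ∑ q : (𝒮 × 𝒳 × 𝒯) × (𝒮 → 𝒯), if q.1 = p then w q else 0 :=
            Equiv.sum_comp E (fun q => if q.1 = p then w q else 0)
        _ = P p := core_p p
    rw [h2]
    exact ENNReal.ofReal_toReal (measure_ne_top μ _)
  · -- I(Y ; S') = 0
    simp only [mutInf]
    rw [hYe, hYSe, E_Y, E_S, E_YS]
    have hindep := indep_entropy_sum Q pS hQ0 hpS0 hQsum hpSsum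
    linarith [hindep]
  · -- I(X' ; Y | S', T') = 0
    simp only [condMutInf, condEntH]
    rw [hYZe, E_XZ, E_YZ, E_XYZ, E_Z]
    have hci := condindep_entropy_sum (fun (i : 𝒮 × 𝒯) (x : 𝒳) => P (i.1, x, i.2))
      (fun i h => r i.1 i.2 h) (fun i x => hP0 _) (fun i h => hr0 _ _ _)
      (fun i => hrsum i.1 i.2)
    have hpst_fold : ∀ i : 𝒮 × 𝒯, (∑ x : 𝒳, P (i.1, x, i.2)) = pST i.1 i.2 :=
      fun i => (hpST_apply _ _).symm
    simp only [hpst_fold] at hci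
    linarith [hci]
  · -- I(Y ; T' | S') = H(T | S)
    simp only [condMutInf, condEntH]
    rw [hYSe, E_YS, E_TS, E_YTS, E_S, hμTS, hμS]
    ring
end
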